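/- arXiv:math/0701804 — 2 statements merged into one kernel-verified Lean document; each statement's English description precedes it below -/
import Mathlib

section
/- With Δ and L as above, for any positive integer k and any smooth function g, [Δ, L^k]g = k L^{k−1}(Z + Z̄ + n + k)g, where Z is the holomorphic Euler operator on C^{n+1}. -/
open Complex

/-- The Wirtinger derivative `∂/∂ζ_j` of a function on `ℂ^m`. -/
noncomputable def wirtingerD {m : ℕ} (j : Fin m) (f : (Fin m → ℂ) → ℂ)
    (z : Fin m → ℂ) : ℂ :=
  (1 / 2) * (fderiv ℝ f z (Pi.single j 1) - Complex.I * fderiv ℝ f z (Pi.single j Complex.I))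

/-- The Wirtinger derivative `∂/∂ζ̄_j` of a function on `ℂ^m`. -/
noncomputable def wirtingerDBar {m : ℕ} (j : Fin m) (f : (Fin m → ℂ) → ℂ)
    (z : Fin m → ℂ) : ℂ :=
  (1 / 2) * (fderiv ℝ f z (Pi.single j 1) + Complex.I * fderiv ℝ f z (Pi.single j Complex.I))

/-- Signs of the Lorentz-hermitian form: `+1` for `j = 0`, `-1` otherwise. -/
def lorentzSign {n : ℕ} (j : Fin (n + 1)) : ℂ := if j = 0 then 1 else -1

/-- The Lorentz-hermitian Laplacian
`Δ = ∂_{ζ0}∂_{ζ̄0} − Σ_{j=1}^n ∂_{ζj}∂_{ζ̄j}` on `ℂ^{n+1}`. -/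
noncomputable def ambientLap (n : ℕ) (f : (Fin (n + 1) → ℂ) → ℂ) :
    (Fin (n + 1) → ℂ) → ℂ :=
  fun z => ∑ j : Fin (n + 1), lorentzSign j * wirtingerD j (wirtingerDBar j f) z

/-- The hermitian form `L(ζ) = |ζ0|² − |ζ1|² − ⋯ − |ζn|²`. -/
noncomputable def lorentzForm (n : ℕ) (z : Fin (n + 1) → ℂ) : ℂ :=
  ∑ j : Fin (n + 1), lorentzSign j * (Complex.normSq (z j) : ℂ)

/-- The holomorphic Euler operator `Z = Σ_j ζ_j ∂_{ζj}`. -/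
noncomputable def eulerZ {n : ℕ} (f : (Fin (n + 1) → ℂ) → ℂ) (z : Fin (n + 1) → ℂ) : ℂ :=
  ∑ j : Fin (n + 1), z j * wirtingerD j f z

/-- The conjugate Euler operator `Z̄ = Σ_j ζ̄_j ∂_{ζ̄j}`. -/
noncomputable def eulerZBar {n : ℕ} (f : (Fin (n + 1) → ℂ) → ℂ) (z : Fin (n + 1) → ℂ) : ℂ :=
  ∑ j : Fin (n + 1), (starRingEnd ℂ) (z j) * wirtingerDBar j f z

/-- `f` is homogeneous of bidegree `(p,q) ∈ ℤ²`:  `f(λζ) = λ^p λ̄^q f(ζ)` for `λ ∈ ℂ*`. -/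
def BiHomogeneous {n : ℕ} (f : (Fin (n + 1) → ℂ) → ℂ) (p q : ℤ) : Prop :=
  ∀ (lam : ℂ), lam ≠ 0 → ∀ z : Fin (n + 1) → ℂ,
    f (lam • z) = lam ^ p * ((starRingEnd ℂ) lam) ^ q * f z

section helpers
variable {m : ℕ} (j : Fin m) {z : Fin m → ℂ}

lemma wd_const (c : ℂ) : wirtingerD j (fun _ => c) z = 0 := by
  simp [wirtingerD, fderiv_const]

lemma wdbar_const (c : ℂ) : wirtingerDBar j (fun _ => c) z = 0 := by
  simp [wirtingerDBar, fderiv_const]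

lemma wd_mul (f h : (Fin m → ℂ) → ℂ) (hf : DifferentiableAt ℝ f z)
    (hh : DifferentiableAt ℝ h z) :
    wirtingerD j (fun w => f w * h w) z
      = wirtingerD j f z * h z + f z * wirtingerD j h z := by
  unfold wirtingerD
  rw [fderiv_fun_mul hf hh]
  simp only [ContinuousLinearMap.add_apply, ContinuousLinearMap.smul_apply, smul_eq_mul]
  ring

lemma wdbar_mul (f h : (Fin m → ℂ) → ℂ) (hf : DifferentiableAt ℝ f z)
    (hh : DifferentiableAt ℝ h z) :
    wirtingerDBar j (fun w => f w * h w) z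
      = wirtingerDBar j f z * h z + f z * wirtingerDBar j h z := by
  unfold wirtingerDBar
  rw [fderiv_fun_mul hf hh]
  simp only [ContinuousLinearMap.add_apply, ContinuousLinearMap.smul_apply, smul_eq_mul]
  ring

lemma wd_const_mul (f : (Fin m → ℂ) → ℂ) (c : ℂ) (hf : DifferentiableAt ℝ f z) :
    wirtingerD j (fun w => c * f w) z = c * wirtingerD j f z := by
  rw [wd_mul j (fun _ => c) f (differentiableAt_const c) hf, wd_const]
  ring

lemma wdbar_const_mul (f : (Fin m → ℂ) → ℂ) (c : ℂ) (hf : DifferentiableAt ℝ f z) :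
    wirtingerDBar j (fun w => c * f w) z = c * wirtingerDBar j f z := by
  rw [wdbar_mul j (fun _ => c) f (differentiableAt_const c) hf, wdbar_const]
  ring

lemma wd_add (f h : (Fin m → ℂ) → ℂ) (hf : DifferentiableAt ℝ f z)
    (hh : DifferentiableAt ℝ h z) :
    wirtingerD j (fun w => f w + h w) z = wirtingerD j f z + wirtingerD j h z := by
  unfold wirtingerD
  rw [fderiv_fun_add hf hh]
  simp only [ContinuousLinearMap.add_apply]
  ring

lemma wd_pow (f : (Fin m → ℂ) → ℂ) (hf : DifferentiableAt ℝ f z) (k : ℕ) :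
    wirtingerD j (fun w => f w ^ k) z = (k : ℂ) * f z ^ (k - 1) * wirtingerD j f z := by
  induction k with
  | zero => simpa using wd_const j (z := z) 1
  | succ K ih =>
    have he : (fun w => f w ^ (K + 1)) = fun w => f w * f w ^ K := by
      funext w; ring
    rw [he, wd_mul j f (fun w => f w ^ K) hf (hf.pow K), ih]
    cases K with
    | zero => simp
    | succ K' =>
      push_cast
      simp only [Nat.add_sub_cancel, pow_succ]
      ring

lemma wdbar_pow (f : (Fin m → ℂ) → ℂ) (hf : DifferentiableAt ℝ f z) (k : ℕ) :
    wirtingerDBar j (fun w => f w ^ k) z = (k : ℂ) * f z ^ (k - 1) * wirtingerDBar j f z := by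
  induction k with
  | zero => simpa using wdbar_const j (z := z) 1
  | succ K ih =>
    have he : (fun w => f w ^ (K + 1)) = fun w => f w * f w ^ K := by
      funext w; ring
    rw [he, wdbar_mul j f (fun w => f w ^ K) hf (hf.pow K), ih]
    cases K with
    | zero => simp
    | succ K' =>
      push_cast
      simp only [Nat.add_sub_cancel, pow_succ]
      ring

lemma wd_sum {ι : Type*} (s : Finset ι) (f : ι → (Fin m → ℂ) → ℂ)
    (hf : ∀ i ∈ s, DifferentiableAt ℝ (f i) z) :
    wirtingerD j (fun w => ∑ i ∈ s, f i w) z = ∑ i ∈ s, wirtingerD j (f i) z := by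
  unfold wirtingerD
  rw [fderiv_fun_sum hf]
  simp only [ContinuousLinearMap.sum_apply, Finset.mul_sum, ← Finset.sum_sub_distrib]

lemma wdbar_sum {ι : Type*} (s : Finset ι) (f : ι → (Fin m → ℂ) → ℂ)
    (hf : ∀ i ∈ s, DifferentiableAt ℝ (f i) z) :
    wirtingerDBar j (fun w => ∑ i ∈ s, f i w) z = ∑ i ∈ s, wirtingerDBar j (f i) z := by
  unfold wirtingerDBar
  rw [fderiv_fun_sum hf]
  simp only [ContinuousLinearMap.sum_apply, Finset.mul_sum, ← Finset.sum_add_distrib]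

end helpers

section atoms
variable {m : ℕ} (j i : Fin m) (z : Fin m → ℂ)

lemma hasFDeriv_coord :
    HasFDerivAt (fun w : Fin m → ℂ => w i)
      (ContinuousLinearMap.proj i : (Fin m → ℂ) →L[ℝ] ℂ) z :=
  (ContinuousLinearMap.proj i : (Fin m → ℂ) →L[ℝ] ℂ).hasFDerivAt

lemma fderiv_coord_apply (v : Fin m → ℂ) :
    fderiv ℝ (fun w : Fin m → ℂ => w i) z v = v i := by
  rw [(hasFDeriv_coord i z).fderiv]; rfl

lemma hasFDeriv_conj_coord :
    HasFDerivAt (fun w : Fin m → ℂ => (starRingEnd ℂ) (w i))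
      ((Complex.conjCLE.toContinuousLinearMap).comp
        (ContinuousLinearMap.proj i : (Fin m → ℂ) →L[ℝ] ℂ)) z := by
  have h := (Complex.conjCLE.toContinuousLinearMap.hasFDerivAt (x := z i)).comp z
      (hasFDeriv_coord i z)
  simpa [Function.comp_def] using h

lemma fderiv_conj_coord_apply (v : Fin m → ℂ) :
    fderiv ℝ (fun w : Fin m → ℂ => (starRingEnd ℂ) (w i)) z v = (starRingEnd ℂ) (v i) := by
  rw [(hasFDeriv_conj_coord i z).fderiv]; simp

lemma diff_coord : DifferentiableAt ℝ (fun w : Fin m → ℂ => w i) z :=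
  (hasFDeriv_coord i z).differentiableAt

lemma diff_conj_coord :
    DifferentiableAt ℝ (fun w : Fin m → ℂ => (starRingEnd ℂ) (w i)) z :=
  (hasFDeriv_conj_coord i z).differentiableAt

lemma wd_coord : wirtingerD j (fun w : Fin m → ℂ => w i) z = if i = j then 1 else 0 := by
  unfold wirtingerD
  rw [fderiv_coord_apply, fderiv_coord_apply]
  simp [Pi.single_apply]
  split <;> norm_num

lemma wdbar_coord : wirtingerDBar j (fun w : Fin m → ℂ => w i) z = 0 := by
  unfold wirtingerDBar
  rw [fderiv_coord_apply, fderiv_coord_apply]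
  simp [Pi.single_apply]
  split <;> norm_num

lemma wd_conj_coord :
    wirtingerD j (fun w : Fin m → ℂ => (starRingEnd ℂ) (w i)) z = 0 := by
  unfold wirtingerD
  rw [fderiv_conj_coord_apply, fderiv_conj_coord_apply]
  simp [Pi.single_apply, apply_ite (starRingEnd ℂ)]

lemma wdbar_conj_coord :
    wirtingerDBar j (fun w : Fin m → ℂ => (starRingEnd ℂ) (w i)) z
      = if i = j then 1 else 0 := by
  unfold wirtingerDBar
  rw [fderiv_conj_coord_apply, fderiv_conj_coord_apply]
  simp [Pi.single_apply, apply_ite (starRingEnd ℂ)]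
  split <;> norm_num

end atoms

section lform
variable {n : ℕ}

lemma lorentzForm_eq (n : ℕ) :
    lorentzForm n = fun z => ∑ j : Fin (n + 1),
      lorentzSign j * (z j * (starRingEnd ℂ) (z j)) := by
  funext z
  unfold lorentzForm
  refine Finset.sum_congr rfl fun j _ => ?_
  rw [Complex.mul_conj]

lemma diff_L : Differentiable ℝ (lorentzForm n) := by
  rw [lorentzForm_eq]
  apply Differentiable.fun_sum
  intro i _
  have h1 : Differentiable ℝ (fun w : Fin (n + 1) → ℂ => w i) := fun z => diff_coord i z
  have h2 : Differentiable ℝ (fun w : Fin (n + 1) → ℂ => (starRingEnd ℂ) (w i)) :=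
    fun z => diff_conj_coord i z
  exact (h1.mul h2).const_mul _

lemma wd_L (j : Fin (n + 1)) (z : Fin (n + 1) → ℂ) :
    wirtingerD j (lorentzForm n) z = lorentzSign j * (starRingEnd ℂ) (z j) := by
  rw [lorentzForm_eq]
  rw [wd_sum j Finset.univ (fun i w => lorentzSign i * (w i * (starRingEnd ℂ) (w i)))
    (fun i _ => ((diff_coord i z).mul (diff_conj_coord i z)).const_mul _)]
  have hterm : ∀ i : Fin (n + 1),
      wirtingerD j (fun w => lorentzSign i * (w i * (starRingEnd ℂ) (w i))) z
        = if i = j then lorentzSign i * (starRingEnd ℂ) (z i) else 0 := by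
    intro i
    rw [wd_const_mul j (fun w => w i * (starRingEnd ℂ) (w i)) _
        ((diff_coord i z).mul (diff_conj_coord i z)),
      wd_mul j (fun w => w i) (fun w => (starRingEnd ℂ) (w i))
        (diff_coord i z) (diff_conj_coord i z),
      wd_coord, wd_conj_coord]
    by_cases h : i = j <;> simp [h]
  simp only [hterm]
  simp

lemma wdbar_L (j : Fin (n + 1)) (z : Fin (n + 1) → ℂ) :
    wirtingerDBar j (lorentzForm n) z = lorentzSign j * z j := by
  rw [lorentzForm_eq]
  rw [wdbar_sum j Finset.univ (fun i w => lorentzSign i * (w i * (starRingEnd ℂ) (w i)))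
    (fun i _ => ((diff_coord i z).mul (diff_conj_coord i z)).const_mul _)]
  have hterm : ∀ i : Fin (n + 1),
      wirtingerDBar j (fun w => lorentzSign i * (w i * (starRingEnd ℂ) (w i))) z
        = if i = j then lorentzSign i * z i else 0 := by
    intro i
    rw [wdbar_const_mul j (fun w => w i * (starRingEnd ℂ) (w i)) _
        ((diff_coord i z).mul (diff_conj_coord i z)),
      wdbar_mul j (fun w => w i) (fun w => (starRingEnd ℂ) (w i))
        (diff_coord i z) (diff_conj_coord i z),
      wdbar_coord, wdbar_conj_coord]
    by_cases h : i = j <;> simp [h]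
  simp only [hterm]
  simp

end lform

lemma contDiff_wdbar {m : ℕ} (j : Fin m) {f : (Fin m → ℂ) → ℂ}
    (hf : ContDiff ℝ (⊤ : ℕ∞) f) : ContDiff ℝ (⊤ : ℕ∞) (wirtingerDBar j f) := by
  unfold wirtingerDBar
  apply ContDiff.mul contDiff_const
  exact ((hf.fderiv_right (by simp)).clm_apply contDiff_const).add
    (ContDiff.mul contDiff_const ((hf.fderiv_right (by simp)).clm_apply contDiff_const))

lemma pow_pred_mul (K : ℕ) (x : ℂ) :
    (K : ℂ) * x ^ (K - 1) * x = (K : ℂ) * x ^ K := by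
  cases K with
  | zero => simp
  | succ K' => simp only [Nat.add_sub_cancel, pow_succ]; ring

/-- `[Δ, L^k]g = k L^{k−1}(Z + Z̄ + n + k)g` for any positive integer `k`
and any smooth function `g` on `ℂ^{n+1}`. -/
theorem commutator_lap_Lpow (n k : ℕ) (hn : 0 < n) (hk : 0 < k)
    (g : (Fin (n + 1) → ℂ) → ℂ) (hsm : ContDiff ℝ (⊤ : ℕ∞) g) :
    ∀ z : Fin (n + 1) → ℂ,
      ambientLap n (fun w => lorentzForm n w ^ k * g w) z
          - lorentzForm n z ^ k * ambientLap n g z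
        = (k : ℂ) * lorentzForm n z ^ (k - 1)
            * (eulerZ g z + eulerZBar g z + ((n : ℂ) + (k : ℂ)) * g z) := by
  obtain ⟨K, rfl⟩ : ∃ K, k = K + 1 := ⟨k - 1, (Nat.succ_pred_eq_of_pos hk).symm⟩
  intro z
  have hgd : Differentiable ℝ g := hsm.differentiable (by simp)
  have hLd : Differentiable ℝ (lorentzForm n) := diff_L
  have hbg : ∀ j : Fin (n + 1), Differentiable ℝ (wirtingerDBar j g) :=
    fun j => (contDiff_wdbar j hsm).differentiable (by simp)
  -- Step 1: first (anti-holomorphic) derivative of L^(K+1) * g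
  have hfun : ∀ j : Fin (n + 1),
      wirtingerDBar j (fun w => lorentzForm n w ^ (K + 1) * g w)
        = fun x => (((K : ℂ) + 1) * lorentzForm n x ^ K * (lorentzSign j * x j)) * g x
            + lorentzForm n x ^ (K + 1) * wirtingerDBar j g x := by
    intro j
    funext x
    rw [wdbar_mul j (fun w => lorentzForm n w ^ (K + 1)) g ((hLd x).pow _) (hgd x),
      wdbar_pow j (lorentzForm n) (hLd x) (K + 1), wdbar_L]
    push_cast [Nat.add_sub_cancel]
    ring
  -- Step 2: per-index full expansion of the ambient Laplacian applied to L^(K+1) * g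
  have key : ambientLap n (fun w => lorentzForm n w ^ (K + 1) * g w) z
      = ∑ j : Fin (n + 1),
          (((K : ℂ) + 1) * (K : ℂ) * g z * lorentzForm n z ^ (K - 1)
              * (lorentzSign j * (z j * (starRingEnd ℂ) (z j)))
            + ((K : ℂ) + 1) * lorentzForm n z ^ K * g z
            + ((K : ℂ) + 1) * lorentzForm n z ^ K * (z j * wirtingerD j g z)
            + ((K : ℂ) + 1) * lorentzForm n z ^ K
                * ((starRingEnd ℂ) (z j) * wirtingerDBar j g z)
            + lorentzForm n z ^ (K + 1)
                * (lorentzSign j * wirtingerD j (wirtingerDBar j g) z)) := by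
    unfold ambientLap
    refine Finset.sum_congr rfl fun j _ => ?_
    rw [hfun j]
    have d1 : DifferentiableAt ℝ
        (fun x => (((K : ℂ) + 1) * lorentzForm n x ^ K * (lorentzSign j * x j)) * g x) z :=
      ((((differentiableAt_const _).mul ((hLd z).pow K)).mul
        ((differentiableAt_const _).mul (diff_coord j z))).mul (hgd z))
    have d2 : DifferentiableAt ℝ
        (fun x => lorentzForm n x ^ (K + 1) * wirtingerDBar j g x) z :=
      ((hLd z).pow _).mul (hbg j z)
    rw [wd_add j _ _ d1 d2,
      wd_mul j (fun x => ((K : ℂ) + 1) * lorentzForm n x ^ K * (lorentzSign j * x j)) g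
        (((differentiableAt_const _).mul ((hLd z).pow K)).mul
          ((differentiableAt_const _).mul (diff_coord j z))) (hgd z),
      wd_mul j (fun x => ((K : ℂ) + 1) * lorentzForm n x ^ K) (fun x => lorentzSign j * x j)
        ((differentiableAt_const _).mul ((hLd z).pow K))
        ((differentiableAt_const _).mul (diff_coord j z)),
      wd_const_mul j (fun x => lorentzForm n x ^ K) _ ((hLd z).pow K),
      wd_pow j (lorentzForm n) (hLd z) K,
      wd_const_mul j (fun x => x j) _ (diff_coord j z),
      wd_coord,
      wd_mul j (fun x => lorentzForm n x ^ (K + 1)) (wirtingerDBar j g)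
        ((hLd z).pow _) (hbg j z),
      wd_pow j (lorentzForm n) (hLd z) (K + 1),
      wd_L]
    push_cast [Nat.add_sub_cancel]
    simp only [eq_self_iff_true, if_true]
    by_cases h0 : j = 0
    · simp only [lorentzSign, if_pos h0]
      ring
    · simp only [lorentzSign, if_neg h0]
      ring
  rw [key]
  simp only [Finset.sum_add_distrib, ← Finset.mul_sum]
  have hL : ∑ j : Fin (n + 1), lorentzSign j * (z j * (starRingEnd ℂ) (z j))
      = lorentzForm n z := (congrFun (lorentzForm_eq n) z).symm
  rw [hL]
  have hZ : ∑ j : Fin (n + 1), z j * wirtingerD j g z = eulerZ g z := rfl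
  have hZb : ∑ j : Fin (n + 1), (starRingEnd ℂ) (z j) * wirtingerDBar j g z
      = eulerZBar g z := rfl
  have hAmb : ∑ j : Fin (n + 1), lorentzSign j * wirtingerD j (wirtingerDBar j g) z
      = ambientLap n g z := rfl
  rw [hZ, hZb, hAmb]
  simp only [Finset.sum_const, Finset.card_univ, Fintype.card_fin, nsmul_eq_mul,
    Nat.add_sub_cancel]
  push_cast
  linear_combination (((K : ℂ) + 1) * g z) * pow_pred_mul K (lorentzForm n z)
end

section
/- If h is smooth on C^{n+1}∖{0} and homogeneous of degree (−1,−1), then Δ^n(L·h) is divisible by L near the null cone, i.e. Δ^n(Lh) vanishes on the set {L = 0}. Consequently, if two smooth functions f̃, f̃' homogeneous of degree (0,0) agree on N = {L = 0}∖{0}, then Δ^n f̃ = Δ^n f̃' on N. -/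
open Complex

open ContDiff

namespace HW

variable {m : ℕ} {f g : (Fin m → ℂ) → ℂ} {z : Fin m → ℂ} {j : Fin m} {s : Set (Fin m → ℂ)}

theorem wD_congr (h : f =ᶠ[nhds z] g) : wirtingerD j f z = wirtingerD j g z := by
  unfold wirtingerD; rw [h.fderiv_eq]

theorem wDbar_congr (h : f =ᶠ[nhds z] g) : wirtingerDBar j f z = wirtingerDBar j g z := by
  unfold wirtingerDBar; rw [h.fderiv_eq]

theorem eventuallyEq_of_eqOn (hs : IsOpen s) (hz : z ∈ s) (h : ∀ w ∈ s, f w = g w) :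
    f =ᶠ[nhds z] g :=
  Filter.eventually_iff_exists_mem.2 ⟨s, hs.mem_nhds hz, h⟩

theorem wD_add (hf : DifferentiableAt ℝ f z) (hg : DifferentiableAt ℝ g z) :
    wirtingerD j (fun w => f w + g w) z = wirtingerD j f z + wirtingerD j g z := by
  unfold wirtingerD; rw [fderiv_fun_add hf hg]; simp; ring

theorem wDbar_add (hf : DifferentiableAt ℝ f z) (hg : DifferentiableAt ℝ g z) :
    wirtingerDBar j (fun w => f w + g w) z = wirtingerDBar j f z + wirtingerDBar j g z := by
  unfold wirtingerDBar; rw [fderiv_fun_add hf hg]; simp; ring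

theorem wD_sub (hf : DifferentiableAt ℝ f z) (hg : DifferentiableAt ℝ g z) :
    wirtingerD j (fun w => f w - g w) z = wirtingerD j f z - wirtingerD j g z := by
  unfold wirtingerD; rw [fderiv_fun_sub hf hg]; simp; ring

theorem wDbar_sub (hf : DifferentiableAt ℝ f z) (hg : DifferentiableAt ℝ g z) :
    wirtingerDBar j (fun w => f w - g w) z = wirtingerDBar j f z - wirtingerDBar j g z := by
  unfold wirtingerDBar; rw [fderiv_fun_sub hf hg]; simp; ring

theorem wD_const_mul (hf : DifferentiableAt ℝ f z) (c : ℂ) :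
    wirtingerD j (fun w => c * f w) z = c * wirtingerD j f z := by
  unfold wirtingerD; rw [fderiv_const_mul hf c]; simp; ring

theorem wDbar_const_mul (hf : DifferentiableAt ℝ f z) (c : ℂ) :
    wirtingerDBar j (fun w => c * f w) z = c * wirtingerDBar j f z := by
  unfold wirtingerDBar; rw [fderiv_const_mul hf c]; simp; ring

theorem wD_mul (hf : DifferentiableAt ℝ f z) (hg : DifferentiableAt ℝ g z) :
    wirtingerD j (fun w => f w * g w) z
      = wirtingerD j f z * g z + f z * wirtingerD j g z := by
  unfold wirtingerD; rw [fderiv_fun_mul hf hg]; simp [smul_eq_mul]; ring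

theorem wDbar_mul (hf : DifferentiableAt ℝ f z) (hg : DifferentiableAt ℝ g z) :
    wirtingerDBar j (fun w => f w * g w) z
      = wirtingerDBar j f z * g z + f z * wirtingerDBar j g z := by
  unfold wirtingerDBar; rw [fderiv_fun_mul hf hg]; simp [smul_eq_mul]; ring

theorem wD_sum {ι : Type*} (u : Finset ι) (A : ι → (Fin m → ℂ) → ℂ)
    (h : ∀ i ∈ u, DifferentiableAt ℝ (A i) z) :
    wirtingerD j (fun w => ∑ i ∈ u, A i w) z = ∑ i ∈ u, wirtingerD j (A i) z := by
  unfold wirtingerD; rw [fderiv_fun_sum h]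
  simp only [ContinuousLinearMap.sum_apply, Finset.mul_sum, Finset.sum_sub_distrib, mul_sub]

theorem wDbar_sum {ι : Type*} (u : Finset ι) (A : ι → (Fin m → ℂ) → ℂ)
    (h : ∀ i ∈ u, DifferentiableAt ℝ (A i) z) :
    wirtingerDBar j (fun w => ∑ i ∈ u, A i w) z = ∑ i ∈ u, wirtingerDBar j (A i) z := by
  unfold wirtingerDBar; rw [fderiv_fun_sum h]
  simp only [ContinuousLinearMap.sum_apply, Finset.mul_sum, Finset.sum_add_distrib, mul_add]

/-- the coordinate function as a CLM -/
theorem fderiv_coord (k : Fin m) (z : Fin m → ℂ) :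
    fderiv ℝ (fun w : Fin m → ℂ => w k) z = ContinuousLinearMap.proj k := by
  exact (ContinuousLinearMap.proj k : (Fin m → ℂ) →L[ℝ] ℂ).fderiv

theorem differentiableAt_coord (k : Fin m) : DifferentiableAt ℝ (fun w : Fin m → ℂ => w k) z :=
  (ContinuousLinearMap.proj k : (Fin m → ℂ) →L[ℝ] ℂ).differentiableAt

theorem contDiff_coord (k : Fin m) : ContDiff ℝ ∞ (fun w : Fin m → ℂ => w k) :=
  (ContinuousLinearMap.proj k : (Fin m → ℂ) →L[ℝ] ℂ).contDiff

theorem wD_coord (k : Fin m) : wirtingerD j (fun w => w k) z = if k = j then 1 else 0 := by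
  unfold wirtingerD; rw [fderiv_coord]
  simp only [ContinuousLinearMap.proj_apply, Pi.single_apply]
  by_cases h : k = j <;> simp [h] <;> ring_nf <;> simp [Complex.I_sq] <;> ring_nf

theorem wDbar_coord (k : Fin m) : wirtingerDBar j (fun w => w k) z = 0 := by
  unfold wirtingerDBar; rw [fderiv_coord]
  simp only [ContinuousLinearMap.proj_apply, Pi.single_apply]
  by_cases h : k = j <;> simp [h] <;> ring_nf <;> simp [Complex.I_sq] <;> ring_nf

/-- conj coordinate -/
noncomputable def conjCoordCLM (k : Fin m) : (Fin m → ℂ) →L[ℝ] ℂ :=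
  (Complex.conjCLE.toContinuousLinearMap).comp (ContinuousLinearMap.proj k)

theorem fderiv_conj_coord (k : Fin m) (z : Fin m → ℂ) :
    fderiv ℝ (fun w : Fin m → ℂ => (starRingEnd ℂ) (w k)) z = conjCoordCLM k := by
  have : (fun w : Fin m → ℂ => (starRingEnd ℂ) (w k)) = conjCoordCLM k := rfl
  rw [this]; exact (conjCoordCLM k).fderiv

theorem differentiableAt_conj_coord (k : Fin m) :
    DifferentiableAt ℝ (fun w : Fin m → ℂ => (starRingEnd ℂ) (w k)) z := by
  have : (fun w : Fin m → ℂ => (starRingEnd ℂ) (w k)) = conjCoordCLM k := rfl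
  rw [this]; exact (conjCoordCLM k).differentiableAt

theorem contDiff_conj_coord (k : Fin m) :
    ContDiff ℝ ∞ (fun w : Fin m → ℂ => (starRingEnd ℂ) (w k)) := by
  have : (fun w : Fin m → ℂ => (starRingEnd ℂ) (w k)) = conjCoordCLM k := rfl
  rw [this]; exact (conjCoordCLM k).contDiff

theorem wD_conj_coord (k : Fin m) :
    wirtingerD j (fun w => (starRingEnd ℂ) (w k)) z = 0 := by
  unfold wirtingerD; rw [fderiv_conj_coord]
  simp only [conjCoordCLM, ContinuousLinearMap.comp_apply, ContinuousLinearMap.proj_apply,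
    ContinuousLinearEquiv.coe_coe, Complex.conjCLE_apply, Pi.single_apply]
  by_cases h : k = j <;> simp [h] <;> ring_nf <;> simp [Complex.I_sq] <;> ring_nf

theorem wDbar_conj_coord (k : Fin m) :
    wirtingerDBar j (fun w => (starRingEnd ℂ) (w k)) z = if k = j then 1 else 0 := by
  unfold wirtingerDBar; rw [fderiv_conj_coord]
  simp only [conjCoordCLM, ContinuousLinearMap.comp_apply, ContinuousLinearMap.proj_apply,
    ContinuousLinearEquiv.coe_coe, Complex.conjCLE_apply, Pi.single_apply]
  by_cases h : k = j <;> simp [h] <;> ring_nf <;> simp [Complex.I_sq] <;> ring_nf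

/-- smoothness of the Wirtinger derivative on an open set -/
theorem contDiffOn_wD (hs : IsOpen s) (hf : ContDiffOn ℝ ∞ f s) :
    ContDiffOn ℝ ∞ (wirtingerD j f) s := by
  have hd : ContDiffOn ℝ ∞ (fderiv ℝ f) s := hf.fderiv_of_isOpen hs (by norm_num)
  unfold wirtingerD
  exact (contDiffOn_const.mul ((hd.clm_apply contDiffOn_const).sub
    (contDiffOn_const.mul (hd.clm_apply contDiffOn_const))))

theorem contDiffOn_wDbar (hs : IsOpen s) (hf : ContDiffOn ℝ ∞ f s) :
    ContDiffOn ℝ ∞ (wirtingerDBar j f) s := by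
  have hd : ContDiffOn ℝ ∞ (fderiv ℝ f) s := hf.fderiv_of_isOpen hs (by norm_num)
  unfold wirtingerDBar
  exact (contDiffOn_const.mul ((hd.clm_apply contDiffOn_const).add
    (contDiffOn_const.mul (hd.clm_apply contDiffOn_const))))

theorem diffAt_of_contDiffOn (hs : IsOpen s) (hf : ContDiffOn ℝ ∞ f s) (hz : z ∈ s) :
    DifferentiableAt ℝ f z :=
  ((hf.differentiableOn (by norm_num)).differentiableAt (hs.mem_nhds hz))

end HW

namespace HW

variable {n : ℕ} {f g u h : (Fin (n + 1) → ℂ) → ℂ} {z : Fin (n + 1) → ℂ}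
  {s : Set (Fin (n + 1) → ℂ)} {j : Fin (n + 1)}

theorem lorentzSign_sq (j : Fin (n + 1)) : lorentzSign j * lorentzSign j = 1 := by
  unfold lorentzSign; by_cases h : j = 0 <;> simp [h]

theorem lorentzForm_eq (z : Fin (n + 1) → ℂ) :
    lorentzForm n z = ∑ k : Fin (n + 1), lorentzSign k * (z k * (starRingEnd ℂ) (z k)) := by
  unfold lorentzForm; congr 1; funext k; rw [Complex.mul_conj]

theorem contDiff_lorentzForm : ContDiff ℝ ∞ (lorentzForm n) := by
  have : lorentzForm n = fun z => ∑ k : Fin (n+1), lorentzSign k * (z k * (starRingEnd ℂ) (z k)) := by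
    funext z; exact lorentzForm_eq z
  rw [this]
  exact ContDiff.sum fun k _ => contDiff_const.mul ((contDiff_coord k).mul (contDiff_conj_coord k))

theorem differentiableAt_lorentzForm : DifferentiableAt ℝ (lorentzForm n) z :=
  contDiff_lorentzForm.differentiable (by norm_num) z

theorem wD_lorentzForm : wirtingerD j (lorentzForm n) z = lorentzSign j * (starRingEnd ℂ) (z j) := by
  have h1 : wirtingerD j (lorentzForm n) z
      = wirtingerD j (fun w => ∑ k : Fin (n+1), lorentzSign k * (w k * (starRingEnd ℂ) (w k))) z :=
    wD_congr (Filter.Eventually.of_forall fun w => lorentzForm_eq w)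
  rw [h1, wD_sum]
  · have : ∀ k, wirtingerD j (fun w => lorentzSign k * (w k * (starRingEnd ℂ) (w k))) z
        = lorentzSign k * ((if k = j then 1 else 0) * (starRingEnd ℂ) (z k)) := by
      intro k
      rw [wD_const_mul (f := fun w => w k * (starRingEnd ℂ) (w k)) ((differentiableAt_coord k).mul (differentiableAt_conj_coord k)),
        wD_mul (differentiableAt_coord k) (differentiableAt_conj_coord k),
        wD_coord, wD_conj_coord]
      ring
    simp only [this]
    simp [Finset.sum_ite_eq]
  · intro k _
    exact (differentiableAt_const _).mul ((differentiableAt_coord k).mul (differentiableAt_conj_coord k))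

theorem wDbar_lorentzForm : wirtingerDBar j (lorentzForm n) z = lorentzSign j * z j := by
  have h1 : wirtingerDBar j (lorentzForm n) z
      = wirtingerDBar j (fun w => ∑ k : Fin (n+1), lorentzSign k * (w k * (starRingEnd ℂ) (w k))) z :=
    wDbar_congr (Filter.Eventually.of_forall fun w => lorentzForm_eq w)
  rw [h1, wDbar_sum]
  · have : ∀ k, wirtingerDBar j (fun w => lorentzSign k * (w k * (starRingEnd ℂ) (w k))) z
        = lorentzSign k * (z k * (if k = j then 1 else 0)) := by
      intro k
      rw [wDbar_const_mul (f := fun w => w k * (starRingEnd ℂ) (w k)) ((differentiableAt_coord k).mul (differentiableAt_conj_coord k)),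
        wDbar_mul (differentiableAt_coord k) (differentiableAt_conj_coord k),
        wDbar_coord, wDbar_conj_coord]
      ring
    simp only [this]
    simp [Finset.sum_ite_eq]
  · intro k _
    exact (differentiableAt_const _).mul ((differentiableAt_coord k).mul (differentiableAt_conj_coord k))

/-- congruence for the Laplacian on an open set -/
theorem lap_congr (hs : IsOpen s) (hz : z ∈ s) (hfg : ∀ w ∈ s, f w = g w) :
    ambientLap n f z = ambientLap n g z := by
  unfold ambientLap
  congr 1; funext j
  congr 1
  apply wD_congr
  apply eventuallyEq_of_eqOn hs hz
  intro w hw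
  exact wDbar_congr (eventuallyEq_of_eqOn hs hw hfg)

theorem contDiffOn_lap (hs : IsOpen s) (hf : ContDiffOn ℝ ∞ f s) :
    ContDiffOn ℝ ∞ (ambientLap n f) s := by
  unfold ambientLap
  exact ContDiffOn.sum fun j _ =>
    contDiffOn_const.mul (contDiffOn_wD hs (contDiffOn_wDbar hs hf))

theorem contDiffOn_lap_iter (hs : IsOpen s) (hf : ContDiffOn ℝ ∞ f s) (k : ℕ) :
    ContDiffOn ℝ ∞ ((ambientLap n)^[k] f) s := by
  induction k generalizing f with
  | zero => exact hf
  | succ k ih =>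
    rw [Function.iterate_succ_apply]
    exact ih (contDiffOn_lap hs hf)

theorem lap_iter_congr (hs : IsOpen s) (hfg : ∀ w ∈ s, f w = g w) (k : ℕ) :
    ∀ w ∈ s, (ambientLap n)^[k] f w = (ambientLap n)^[k] g w := by
  induction k generalizing f g with
  | zero => exact hfg
  | succ k ih =>
    intro w hw
    rw [Function.iterate_succ_apply', Function.iterate_succ_apply']
    exact lap_congr hs hw (ih hfg)

theorem lap_add (hs : IsOpen s) (hz : z ∈ s) (hf : ContDiffOn ℝ ∞ f s)
    (hg : ContDiffOn ℝ ∞ g s) :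
    ambientLap n (fun w => f w + g w) z = ambientLap n f z + ambientLap n g z := by
  unfold ambientLap
  rw [← Finset.sum_add_distrib]
  congr 1; funext j
  have hbar : ∀ w ∈ s, wirtingerDBar j (fun w => f w + g w) w
      = wirtingerDBar j f w + wirtingerDBar j g w := fun w hw =>
    wDbar_add (diffAt_of_contDiffOn hs hf hw) (diffAt_of_contDiffOn hs hg hw)
  rw [wD_congr (eventuallyEq_of_eqOn hs hz hbar),
    wD_add (diffAt_of_contDiffOn hs (contDiffOn_wDbar hs hf) hz)
      (diffAt_of_contDiffOn hs (contDiffOn_wDbar hs hg) hz)]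
  ring

theorem lap_sub (hs : IsOpen s) (hz : z ∈ s) (hf : ContDiffOn ℝ ∞ f s)
    (hg : ContDiffOn ℝ ∞ g s) :
    ambientLap n (fun w => f w - g w) z = ambientLap n f z - ambientLap n g z := by
  unfold ambientLap
  rw [← Finset.sum_sub_distrib]
  congr 1; funext j
  have hbar : ∀ w ∈ s, wirtingerDBar j (fun w => f w - g w) w
      = wirtingerDBar j f w - wirtingerDBar j g w := fun w hw =>
    wDbar_sub (diffAt_of_contDiffOn hs hf hw) (diffAt_of_contDiffOn hs hg hw)
  rw [wD_congr (eventuallyEq_of_eqOn hs hz hbar),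
    wD_sub (diffAt_of_contDiffOn hs (contDiffOn_wDbar hs hf) hz)
      (diffAt_of_contDiffOn hs (contDiffOn_wDbar hs hg) hz)]
  ring

theorem lap_const_mul (hs : IsOpen s) (hz : z ∈ s) (hf : ContDiffOn ℝ ∞ f s) (c : ℂ) :
    ambientLap n (fun w => c * f w) z = c * ambientLap n f z := by
  unfold ambientLap
  rw [Finset.mul_sum]
  congr 1; funext j
  have hbar : ∀ w ∈ s, wirtingerDBar j (fun w => c * f w) w
      = c * wirtingerDBar j f w := fun w hw =>
    wDbar_const_mul (diffAt_of_contDiffOn hs hf hw) c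
  rw [wD_congr (eventuallyEq_of_eqOn hs hz hbar),
    wD_const_mul (diffAt_of_contDiffOn hs (contDiffOn_wDbar hs hf) hz)]
  ring

/-- THE core single-step computation. -/
theorem lap_L_mul (hs : IsOpen s) (hz : z ∈ s) (hu : ContDiffOn ℝ ∞ u s) :
    ambientLap n (fun w => lorentzForm n w * u w) z
      = lorentzForm n z * ambientLap n u z + ((n : ℂ) + 1) * u z
        + eulerZ u z + eulerZBar u z := by
  have hLd : ∀ w, DifferentiableAt ℝ (lorentzForm n) w := fun _ => differentiableAt_lorentzForm
  have hud : ∀ w ∈ s, DifferentiableAt ℝ u w := fun w hw => diffAt_of_contDiffOn hs hu hw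
  have step1 : ∀ j : Fin (n+1), ∀ w ∈ s,
      wirtingerDBar j (fun w => lorentzForm n w * u w) w
        = (lorentzSign j * w j) * u w + lorentzForm n w * wirtingerDBar j u w := by
    intro j w hw
    rw [wDbar_mul (hLd w) (hud w hw), wDbar_lorentzForm]
  have key : ∀ j : Fin (n+1),
      wirtingerD j (wirtingerDBar j (fun w => lorentzForm n w * u w)) z
        = lorentzSign j * u z + lorentzSign j * z j * wirtingerD j u z
          + lorentzSign j * (starRingEnd ℂ) (z j) * wirtingerDBar j u z
          + lorentzForm n z * wirtingerD j (wirtingerDBar j u) z := by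
    intro j
    rw [wD_congr (eventuallyEq_of_eqOn hs hz (step1 j))]
    have d1 : DifferentiableAt ℝ (fun w : Fin (n+1) → ℂ => (lorentzSign j * w j) * u w) z :=
      ((differentiableAt_const _).mul (differentiableAt_coord j)).mul (hud z hz)
    have d2 : DifferentiableAt ℝ (fun w => lorentzForm n w * wirtingerDBar j u w) z :=
      (hLd z).mul (diffAt_of_contDiffOn hs (contDiffOn_wDbar hs hu) hz)
    rw [wD_add d1 d2,
      wD_mul (f := fun w => lorentzSign j * w j) ((differentiableAt_const _).mul (differentiableAt_coord j)) (hud z hz),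
      wD_const_mul (differentiableAt_coord j), wD_coord,
      wD_mul (hLd z) (diffAt_of_contDiffOn hs (contDiffOn_wDbar hs hu) hz),
      wD_lorentzForm]
    simp only [if_pos rfl, if_true]
    ring
  unfold ambientLap eulerZ eulerZBar
  have term : ∀ j : Fin (n+1),
      lorentzSign j * (lorentzSign j * u z + lorentzSign j * z j * wirtingerD j u z
          + lorentzSign j * (starRingEnd ℂ) (z j) * wirtingerDBar j u z
          + lorentzForm n z * wirtingerD j (wirtingerDBar j u) z)
        = u z + z j * wirtingerD j u z + (starRingEnd ℂ) (z j) * wirtingerDBar j u z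
          + lorentzForm n z * (lorentzSign j * wirtingerD j (wirtingerDBar j u) z) := by
    intro j
    have hsq := lorentzSign_sq j
    linear_combination (u z + z j * wirtingerD j u z
      + (starRingEnd ℂ) (z j) * wirtingerDBar j u z) * hsq
  simp only [key, term]
  rw [Finset.sum_add_distrib, Finset.sum_add_distrib, Finset.sum_add_distrib, ← Finset.mul_sum,
    Finset.sum_const, Finset.card_univ, Fintype.card_fin, nsmul_eq_mul]
  push_cast
  ring

variable {C : Set (Fin (n + 1) → ℂ)}

def IsCone (C : Set (Fin (n + 1) → ℂ)) : Prop :=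
  ∀ (lam : ℂ), lam ≠ 0 → ∀ z ∈ C, lam • z ∈ C

def HomOn (f : (Fin (n + 1) → ℂ) → ℂ) (p q : ℤ) (C : Set (Fin (n + 1) → ℂ)) : Prop :=
  ∀ (lam : ℂ), lam ≠ 0 → ∀ z ∈ C, f (lam • z) = lam ^ p * ((starRingEnd ℂ) lam) ^ q * f z

/-- applying an ℝ-linear functional to a complex single -/
theorem apply_single_decomp (φ : (Fin (n + 1) → ℂ) →L[ℝ] ℂ) (j : Fin (n + 1)) (a : ℂ) :
    φ (Pi.single j a) = (a.re : ℂ) * φ (Pi.single j 1) + (a.im : ℂ) * φ (Pi.single j Complex.I) := by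
  have hsingle : (Pi.single j a : Fin (n + 1) → ℂ)
      = a.re • (Pi.single j (1:ℂ) : Fin (n + 1) → ℂ)
        + a.im • (Pi.single j Complex.I : Fin (n + 1) → ℂ) := by
    funext k
    by_cases hk : k = j <;>
      simp [hk, Pi.single_apply, Complex.real_smul, Complex.re_add_im]
  rw [hsingle, φ.map_add, φ.map_smul, φ.map_smul, Complex.real_smul, Complex.real_smul]

theorem single_eq_smul_single (lam : ℂ) (j : Fin (n + 1)) (a : ℂ) :
    (Pi.single j (lam * a) : Fin (n + 1) → ℂ) = lam • (Pi.single j a : Fin (n + 1) → ℂ) := by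
  funext k
  by_cases hk : k = j <;> simp [hk, Pi.single_apply]

/-- scaled chain rule for homogeneous functions -/
theorem hom_fderiv_scale (hC : IsOpen C) (hf : ContDiffOn ℝ ∞ f C)
    {p q : ℤ} (hhom : HomOn f p q C) {lam : ℂ} (hlam : lam ≠ 0) (hz : z ∈ C)
    (hzC : lam • z ∈ C) (v : Fin (n + 1) → ℂ) :
    fderiv ℝ f (lam • z) (lam • v)
      = lam ^ p * ((starRingEnd ℂ) lam) ^ q * fderiv ℝ f z v := by
  set S : (Fin (n + 1) → ℂ) →L[ℝ] (Fin (n + 1) → ℂ) :=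
    (lam • ContinuousLinearMap.id ℂ (Fin (n + 1) → ℂ)).restrictScalars ℝ with hS
  have hSapp : ∀ w, S w = lam • w := fun w => rfl
  have heq : (fun w => f (S w)) =ᶠ[nhds z]
      (fun w => lam ^ p * ((starRingEnd ℂ) lam) ^ q * f w) := by
    apply eventuallyEq_of_eqOn hC hz
    intro w hw
    rw [hSapp]
    exact hhom lam hlam w hw
  have hdf : DifferentiableAt ℝ f (S z) := by
    rw [hSapp]; exact diffAt_of_contDiffOn hC hf hzC
  have hcomp : fderiv ℝ (fun w => f (S w)) z = (fderiv ℝ f (S z)).comp S := by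
    have := fderiv_comp z hdf S.differentiableAt
    rw [S.fderiv] at this
    exact this
  have hrhs : fderiv ℝ (fun w => lam ^ p * ((starRingEnd ℂ) lam) ^ q * f w) z
      = (lam ^ p * ((starRingEnd ℂ) lam) ^ q) • fderiv ℝ f z :=
    fderiv_const_mul (diffAt_of_contDiffOn hC hf hz) _
  have hce : fderiv ℝ (fun w => f (S w)) z
      = fderiv ℝ (fun w => lam ^ p * ((starRingEnd ℂ) lam) ^ q * f w) z :=
    heq.fderiv_eq
  rw [hcomp, hrhs] at hce
  have happ := congrArg (fun (T : (Fin (n + 1) → ℂ) →L[ℝ] ℂ) => T v) hce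
  simpa [hSapp, smul_eq_mul] using happ

theorem hom_wD (hC : IsOpen C) (hcone : IsCone C) (hf : ContDiffOn ℝ ∞ f C)
    {p q : ℤ} (hhom : HomOn f p q C) (j : Fin (n + 1)) :
    HomOn (wirtingerD j f) (p - 1) q C := by
  intro lam hlam z hz
  have hzC := hcone lam hlam z hz
  set X := fderiv ℝ f z (Pi.single j 1) with hX
  set Y := fderiv ℝ f z (Pi.single j Complex.I) with hY
  set a : ℂ := lam⁻¹ with ha
  set c : ℂ := lam ^ p * ((starRingEnd ℂ) lam) ^ q with hc
  have h1 : fderiv ℝ f (lam • z) (Pi.single j 1)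
      = c * ((a.re : ℂ) * X + (a.im : ℂ) * Y) := by
    have : (Pi.single j (1:ℂ) : Fin (n + 1) → ℂ) = lam • (Pi.single j a : Fin (n + 1) → ℂ) := by
      rw [← single_eq_smul_single, mul_inv_cancel₀ hlam]
    rw [this, hom_fderiv_scale hC hf hhom hlam hz hzC, apply_single_decomp]
  have h2 : fderiv ℝ f (lam • z) (Pi.single j Complex.I)
      = c * (((a * Complex.I).re : ℂ) * X + ((a * Complex.I).im : ℂ) * Y) := by
    have : (Pi.single j Complex.I : Fin (n + 1) → ℂ)
        = lam • (Pi.single j (a * Complex.I) : Fin (n + 1) → ℂ) := by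
      rw [← single_eq_smul_single, ← mul_assoc, mul_inv_cancel₀ hlam, one_mul]
    rw [this, hom_fderiv_scale hC hf hhom hlam hz hzC, apply_single_decomp]
  show (1/2) * (fderiv ℝ f (lam • z) (Pi.single j 1)
      - Complex.I * fderiv ℝ f (lam • z) (Pi.single j Complex.I))
    = lam ^ (p - 1) * ((starRingEnd ℂ) lam) ^ q * ((1/2) * (X - Complex.I * Y))
  rw [h1, h2, zpow_sub_one₀ hlam]
  have hre : ((a * Complex.I).re : ℂ) = -(a.im : ℂ) := by
    simp [Complex.mul_I_re]
  have him : ((a * Complex.I).im : ℂ) = (a.re : ℂ) := by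
    simp [Complex.mul_I_im]
  rw [hre, him]
  have hrei : (a.re : ℂ) + (a.im : ℂ) * Complex.I = a := Complex.re_add_im a
  have : lam ^ p * lam⁻¹ * ((starRingEnd ℂ) lam) ^ q * ((1/2) * (X - Complex.I * Y))
      = c * a * ((1/2) * (X - Complex.I * Y)) := by rw [hc, ha]; ring
  rw [this]
  linear_combination ((1/2) * c * X - (1/2) * c * Complex.I * Y) * hrei
    + ((1/2) * c * (a.im : ℂ) * Y) * Complex.I_sq

theorem hom_wDbar (hC : IsOpen C) (hcone : IsCone C) (hf : ContDiffOn ℝ ∞ f C)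
    {p q : ℤ} (hhom : HomOn f p q C) (j : Fin (n + 1)) :
    HomOn (wirtingerDBar j f) p (q - 1) C := by
  intro lam hlam z hz
  have hzC := hcone lam hlam z hz
  set X := fderiv ℝ f z (Pi.single j 1) with hX
  set Y := fderiv ℝ f z (Pi.single j Complex.I) with hY
  set a : ℂ := lam⁻¹ with ha
  set c : ℂ := lam ^ p * ((starRingEnd ℂ) lam) ^ q with hc
  have h1 : fderiv ℝ f (lam • z) (Pi.single j 1)
      = c * ((a.re : ℂ) * X + (a.im : ℂ) * Y) := by
    have : (Pi.single j (1:ℂ) : Fin (n + 1) → ℂ) = lam • (Pi.single j a : Fin (n + 1) → ℂ) := by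
      rw [← single_eq_smul_single, mul_inv_cancel₀ hlam]
    rw [this, hom_fderiv_scale hC hf hhom hlam hz hzC, apply_single_decomp]
  have h2 : fderiv ℝ f (lam • z) (Pi.single j Complex.I)
      = c * (((a * Complex.I).re : ℂ) * X + ((a * Complex.I).im : ℂ) * Y) := by
    have : (Pi.single j Complex.I : Fin (n + 1) → ℂ)
        = lam • (Pi.single j (a * Complex.I) : Fin (n + 1) → ℂ) := by
      rw [← single_eq_smul_single, ← mul_assoc, mul_inv_cancel₀ hlam, one_mul]
    rw [this, hom_fderiv_scale hC hf hhom hlam hz hzC, apply_single_decomp]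
  show (1/2) * (fderiv ℝ f (lam • z) (Pi.single j 1)
      + Complex.I * fderiv ℝ f (lam • z) (Pi.single j Complex.I))
    = lam ^ p * ((starRingEnd ℂ) lam) ^ (q - 1) * ((1/2) * (X + Complex.I * Y))
  rw [h1, h2, zpow_sub_one₀ (by simpa using hlam : (starRingEnd ℂ) lam ≠ 0)]
  have hre : ((a * Complex.I).re : ℂ) = -(a.im : ℂ) := by
    simp [Complex.mul_I_re]
  have him : ((a * Complex.I).im : ℂ) = (a.re : ℂ) := by
    simp [Complex.mul_I_im]
  rw [hre, him]
  have hconj : (a.re : ℂ) - (a.im : ℂ) * Complex.I = (starRingEnd ℂ) a := by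
    have h := congrArg (starRingEnd ℂ) (Complex.re_add_im a)
    simp only [map_add, map_mul, Complex.conj_ofReal, Complex.conj_I] at h
    linear_combination h
  have hcast : ((starRingEnd ℂ) lam)⁻¹ = (starRingEnd ℂ) a := by
    rw [ha, map_inv₀]
  have : lam ^ p * (((starRingEnd ℂ) lam) ^ q * ((starRingEnd ℂ) lam)⁻¹)
        * ((1/2) * (X + Complex.I * Y))
      = c * ((starRingEnd ℂ) a) * ((1/2) * (X + Complex.I * Y)) := by
    rw [hcast, hc]; ring
  rw [this]
  linear_combination ((1/2) * c * X + (1/2) * c * Complex.I * Y) * hconj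
    + ((1/2) * c * (a.im : ℂ) * Y) * Complex.I_sq

/-- radial derivative of a homogeneous function -/
theorem hom_fderiv_self (hC : IsOpen C) (hcone : IsCone C) (hf : ContDiffOn ℝ ∞ f C)
    {p q : ℤ} (hhom : HomOn f p q C) (hz : z ∈ C) :
    fderiv ℝ f z z = (((p + q : ℤ) : ℂ)) * f z := by
  have hdf : HasFDerivAt f (fderiv ℝ f z) z :=
    (diffAt_of_contDiffOn hC hf hz).hasFDerivAt
  -- curve t ↦ (1+t) • z
  have hbase : HasDerivAt (fun t : ℝ => ((1 : ℂ) + (t : ℂ))) 1 0 := by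
    simpa using ((Complex.ofRealCLM.hasDerivAt (x := (0:ℝ))).const_add (1 : ℂ))
  have hc : HasDerivAt (fun t : ℝ => ((1 : ℂ) + (t : ℂ)) • z) z 0 := by
    simpa using hbase.smul_const z
  have hc0 : ((1 : ℂ) + ((0:ℝ) : ℂ)) • z = z := by simp
  have hdf' : HasFDerivAt f (fderiv ℝ f z) (((1 : ℂ) + ((0:ℝ) : ℂ)) • z) := by
    rw [hc0]; exact hdf
  have hl : HasDerivAt (fun t : ℝ => f (((1 : ℂ) + (t : ℂ)) • z)) (fderiv ℝ f z z) 0 := by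
    have := HasFDerivAt.comp_hasDerivAt (0:ℝ) hdf' hc
    simpa [Function.comp_def] using this
  -- the model function
  have hr : HasDerivAt (fun t : ℝ => ((1 : ℂ) + (t : ℂ)) ^ (p + q) * f z)
      ((((p + q : ℤ) : ℂ)) * f z) 0 := by
    have h1 : HasDerivAt (fun w : ℂ => ((1 : ℂ) + w) ^ (p + q))
        ((((p+q : ℤ):ℂ)) * ((1 : ℂ) + ((0:ℝ):ℂ)) ^ (p + q - 1) * 1) (((0:ℝ) : ℂ)) := by
      have hz1 : ((1:ℂ) + ((0:ℝ):ℂ)) ≠ 0 := by simp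
      have base := hasDerivAt_zpow (p + q) ((1:ℂ) + ((0:ℝ):ℂ)) (Or.inl hz1)
      have inner : HasDerivAt (fun w : ℂ => (1 : ℂ) + w) 1 (((0:ℝ):ℂ)) := by
        simpa using (hasDerivAt_id (((0:ℝ):ℂ))).const_add (1:ℂ)
      simpa [Function.comp_def] using base.comp (((0:ℝ):ℂ)) inner
    have h2 := h1.comp_ofReal (z := (0:ℝ))
    have h3 : ((((p+q : ℤ):ℂ)) * ((1 : ℂ) + ((0:ℝ):ℂ)) ^ (p + q - 1) * 1) = (((p + q : ℤ) : ℂ)) := by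
      simp
    rw [h3] at h2
    simpa using h2.mul_const (f z)
  -- the two functions agree near 0
  have hev : (fun t : ℝ => f (((1 : ℂ) + (t : ℂ)) • z))
      =ᶠ[nhds (0:ℝ)] (fun t : ℝ => ((1 : ℂ) + (t : ℂ)) ^ (p + q) * f z) := by
    have hball : Metric.ball (0:ℝ) 1 ∈ nhds (0:ℝ) := Metric.ball_mem_nhds _ one_pos
    filter_upwards [hball] with t ht
    have ht' : |t| < 1 := by simpa [Real.dist_eq] using ht
    have htpos : (0:ℝ) < 1 + t := by
      have := abs_lt.1 ht'
      linarith [this.1]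
    have hne : ((1 : ℂ) + (t : ℂ)) ≠ 0 := by
      have : ((1 : ℂ) + (t : ℂ)) = ((1 + t : ℝ) : ℂ) := by push_cast; ring
      rw [this]
      exact_mod_cast ne_of_gt htpos
    have hcj : (starRingEnd ℂ) ((1 : ℂ) + (t : ℂ)) = ((1 : ℂ) + (t : ℂ)) := by
      simp [map_add, Complex.conj_ofReal]
    rw [hhom _ hne z hz, hcj, ← zpow_add₀ hne]
  have hl' : HasDerivAt (fun t : ℝ => ((1 : ℂ) + (t : ℂ)) ^ (p + q) * f z)
      (fderiv ℝ f z z) 0 := hl.congr_of_eventuallyEq hev.symm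
  exact hl'.unique hr

/-- rotational derivative of a homogeneous function -/
theorem hom_fderiv_rot (hC : IsOpen C) (hcone : IsCone C) (hf : ContDiffOn ℝ ∞ f C)
    {p q : ℤ} (hhom : HomOn f p q C) (hz : z ∈ C) :
    fderiv ℝ f z (Complex.I • z) = (((p : ℂ) - (q : ℂ)) * Complex.I) * f z := by
  have hdf : HasFDerivAt f (fderiv ℝ f z) z :=
    (diffAt_of_contDiffOn hC hf hz).hasFDerivAt
  -- the scalar curve
  have hescalar : ∀ t : ℝ, HasDerivAt (fun s : ℝ => Complex.exp ((s : ℂ) * Complex.I))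
      (Complex.exp ((t : ℂ) * Complex.I) * Complex.I) t := by
    intro t
    have h1 : HasDerivAt (fun w : ℂ => Complex.exp (w * Complex.I))
        (Complex.exp ((t : ℂ) * Complex.I) * Complex.I) ((t : ℝ) : ℂ) := by
      have base := Complex.hasDerivAt_exp (((t:ℝ):ℂ) * Complex.I)
      have inner : HasDerivAt (fun w : ℂ => w * Complex.I) Complex.I (((t:ℝ):ℂ)) := by
        simpa using (hasDerivAt_id (((t:ℝ):ℂ))).mul_const Complex.I
      simpa [Function.comp_def] using base.comp (((t:ℝ):ℂ)) inner
    exact h1.comp_ofReal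
  have hc : HasDerivAt (fun t : ℝ => Complex.exp ((t : ℂ) * Complex.I) • z)
      (Complex.I • z) 0 := by
    have := (hescalar 0).smul_const z
    simpa using this
  have hc0 : Complex.exp (((0:ℝ) : ℂ) * Complex.I) • z = z := by simp
  have hdf' : HasFDerivAt f (fderiv ℝ f z) (Complex.exp (((0:ℝ) : ℂ) * Complex.I) • z) := by
    rw [hc0]; exact hdf
  have hl : HasDerivAt (fun t : ℝ => f (Complex.exp ((t : ℂ) * Complex.I) • z))
      (fderiv ℝ f z (Complex.I • z)) 0 := by
    have := HasFDerivAt.comp_hasDerivAt (0:ℝ) hdf' hc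
    simpa [Function.comp_def] using this
  have hr : HasDerivAt (fun t : ℝ => Complex.exp ((((p : ℂ) - (q : ℂ)) * Complex.I) * (t : ℂ)) * f z)
      ((((p : ℂ) - (q : ℂ)) * Complex.I) * f z) 0 := by
    set c0 : ℂ := ((p : ℂ) - (q : ℂ)) * Complex.I with hc0def
    have h1 : HasDerivAt (fun w : ℂ => Complex.exp (c0 * w))
        (Complex.exp (c0 * ((0:ℝ):ℂ)) * c0) (((0:ℝ):ℂ)) := by
      have base := Complex.hasDerivAt_exp (c0 * ((0:ℝ):ℂ))
      have inner : HasDerivAt (fun w : ℂ => c0 * w) c0 (((0:ℝ):ℂ)) := by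
        simpa using (hasDerivAt_id (((0:ℝ):ℂ))).const_mul c0
      simpa [Function.comp_def] using base.comp (((0:ℝ):ℂ)) inner
    have h2 := h1.comp_ofReal (z := (0:ℝ))
    have h3 : Complex.exp (c0 * ((0:ℝ):ℂ)) * c0 = c0 := by simp
    rw [h3] at h2
    simpa using h2.mul_const (f z)
  have hev : (fun t : ℝ => f (Complex.exp ((t : ℂ) * Complex.I) • z))
      =ᶠ[nhds (0:ℝ)] (fun t : ℝ =>
        Complex.exp ((((p : ℂ) - (q : ℂ)) * Complex.I) * (t : ℂ)) * f z) := by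
    apply Filter.Eventually.of_forall
    intro t
    have hne : Complex.exp ((t : ℂ) * Complex.I) ≠ 0 := Complex.exp_ne_zero _
    show f (Complex.exp ((t : ℂ) * Complex.I) • z)
      = Complex.exp ((((p : ℂ) - (q : ℂ)) * Complex.I) * (t : ℂ)) * f z
    rw [hhom _ hne z hz]
    congr 1
    have hcj : (starRingEnd ℂ) (Complex.exp ((t : ℂ) * Complex.I))
        = Complex.exp (-((t : ℂ) * Complex.I)) := by
      rw [← Complex.exp_conj]
      congr 1
      simp [map_mul, Complex.conj_ofReal, Complex.conj_I]
    rw [hcj, ← Complex.exp_int_mul, ← Complex.exp_int_mul, ← Complex.exp_add]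
    congr 1
    push_cast
    ring
  have hl' := hl.congr_of_eventuallyEq hev.symm
  exact hl'.unique hr

/-- decomposition of the Euler operators via directional derivatives -/
theorem eulerZ_decomp (hd : DifferentiableAt ℝ f z) :
    eulerZ f z = (1/2) * (fderiv ℝ f z z - Complex.I * fderiv ℝ f z (Complex.I • z)) := by
  set φ := fderiv ℝ f z with hφ
  have hzdec : z = ∑ j : Fin (n+1), Pi.single j (z j) := (Finset.univ_sum_single z).symm
  have hIzdec : Complex.I • z = ∑ j : Fin (n+1), (Pi.single j (Complex.I * z j) : Fin (n+1) → ℂ) := by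
    have h := (Finset.univ_sum_single (Complex.I • z)).symm
    simpa [Pi.smul_apply, smul_eq_mul] using h
  have h1 : φ z = ∑ j : Fin (n+1), (((z j).re : ℂ) * φ (Pi.single j 1)
      + ((z j).im : ℂ) * φ (Pi.single j Complex.I)) := by
    conv_lhs => rw [hzdec]
    rw [map_sum]
    exact Finset.sum_congr rfl fun j _ => apply_single_decomp φ j (z j)
  have h2 : φ (Complex.I • z) = ∑ j : Fin (n+1), ((((Complex.I * z j)).re : ℂ) * φ (Pi.single j 1)
      + (((Complex.I * z j)).im : ℂ) * φ (Pi.single j Complex.I)) := by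
    conv_lhs => rw [hIzdec]
    rw [map_sum]
    exact Finset.sum_congr rfl fun j _ => apply_single_decomp φ j _
  rw [h1, h2]
  unfold eulerZ wirtingerD
  rw [← hφ, Finset.mul_sum, ← Finset.sum_sub_distrib, Finset.mul_sum]
  apply Finset.sum_congr rfl
  intro j _
  have hre : ((Complex.I * z j).re : ℂ) = -(((z j).im : ℂ)) := by
    simp [Complex.mul_re]
  have him : ((Complex.I * z j).im : ℂ) = ((z j).re : ℂ) := by
    simp [Complex.mul_im]
  rw [hre, him]
  have hrei : (((z j).re : ℂ)) + (((z j).im : ℂ)) * Complex.I = z j := Complex.re_add_im (z j)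
  linear_combination (-(1/2) * φ (Pi.single j 1) + (1/2) * Complex.I * φ (Pi.single j Complex.I)) * hrei
    - ((1/2) * ((z j).im : ℂ) * φ (Pi.single j Complex.I)) * Complex.I_sq

theorem eulerZBar_decomp (hd : DifferentiableAt ℝ f z) :
    eulerZBar f z = (1/2) * (fderiv ℝ f z z + Complex.I * fderiv ℝ f z (Complex.I • z)) := by
  set φ := fderiv ℝ f z with hφ
  have hzdec : z = ∑ j : Fin (n+1), Pi.single j (z j) := (Finset.univ_sum_single z).symm
  have hIzdec : Complex.I • z = ∑ j : Fin (n+1), (Pi.single j (Complex.I * z j) : Fin (n+1) → ℂ) := by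
    have h := (Finset.univ_sum_single (Complex.I • z)).symm
    simpa [Pi.smul_apply, smul_eq_mul] using h
  have h1 : φ z = ∑ j : Fin (n+1), (((z j).re : ℂ) * φ (Pi.single j 1)
      + ((z j).im : ℂ) * φ (Pi.single j Complex.I)) := by
    conv_lhs => rw [hzdec]
    rw [map_sum]
    exact Finset.sum_congr rfl fun j _ => apply_single_decomp φ j (z j)
  have h2 : φ (Complex.I • z) = ∑ j : Fin (n+1), ((((Complex.I * z j)).re : ℂ) * φ (Pi.single j 1)
      + (((Complex.I * z j)).im : ℂ) * φ (Pi.single j Complex.I)) := by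
    conv_lhs => rw [hIzdec]
    rw [map_sum]
    exact Finset.sum_congr rfl fun j _ => apply_single_decomp φ j _
  rw [h1, h2]
  unfold eulerZBar wirtingerDBar
  rw [← hφ, Finset.mul_sum, ← Finset.sum_add_distrib, Finset.mul_sum]
  apply Finset.sum_congr rfl
  intro j _
  have hre : ((Complex.I * z j).re : ℂ) = -(((z j).im : ℂ)) := by
    simp [Complex.mul_re]
  have him : ((Complex.I * z j).im : ℂ) = ((z j).re : ℂ) := by
    simp [Complex.mul_im]
  rw [hre, him]
  have hconj : (((z j).re : ℂ)) - (((z j).im : ℂ)) * Complex.I = (starRingEnd ℂ) (z j) := by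
    have h := congrArg (starRingEnd ℂ) (Complex.re_add_im (z j))
    simp only [map_add, map_mul, Complex.conj_ofReal, Complex.conj_I] at h
    linear_combination h
  linear_combination (-(1/2) * φ (Pi.single j 1) - (1/2) * Complex.I * φ (Pi.single j Complex.I)) * hconj
    - ((1/2) * ((z j).im : ℂ) * φ (Pi.single j Complex.I)) * Complex.I_sq

/-- Euler identities -/
theorem euler_eq (hC : IsOpen C) (hcone : IsCone C) (hf : ContDiffOn ℝ ∞ f C)
    {p q : ℤ} (hhom : HomOn f p q C) (hz : z ∈ C) :
    eulerZ f z = (p : ℂ) * f z ∧ eulerZBar f z = (q : ℂ) * f z := by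
  have hd := diffAt_of_contDiffOn hC hf hz
  have h1 := hom_fderiv_self hC hcone hf hhom hz
  have h2 := hom_fderiv_rot hC hcone hf hhom hz
  constructor
  · rw [eulerZ_decomp hd, h1, h2]
    push_cast
    linear_combination (-(1/2) * ((p:ℂ) - q) * f z) * Complex.I_sq
  · rw [eulerZBar_decomp hd, h1, h2]
    push_cast
    linear_combination ((1/2) * ((p:ℂ) - q) * f z) * Complex.I_sq

theorem hom_lap (hC : IsOpen C) (hcone : IsCone C) (hf : ContDiffOn ℝ ∞ f C)
    {p q : ℤ} (hhom : HomOn f p q C) :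
    HomOn (ambientLap n f) (p - 1) (q - 1) C := by
  intro lam hlam z hz
  unfold ambientLap
  rw [Finset.mul_sum]
  apply Finset.sum_congr rfl
  intro j _
  have h1 : HomOn (wirtingerDBar j f) p (q - 1) C := hom_wDbar hC hcone hf hhom j
  have h2 : HomOn (wirtingerD j (wirtingerDBar j f)) (p - 1) (q - 1) C :=
    hom_wD hC hcone (contDiffOn_wDbar hC hf) h1 j
  rw [h2 lam hlam z hz]
  ring

theorem hom_lap_iter (hC : IsOpen C) (hcone : IsCone C) (hf : ContDiffOn ℝ ∞ f C)
    {p q : ℤ} (hhom : HomOn f p q C) (k : ℕ) :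
    HomOn ((ambientLap n)^[k] f) (p - k) (q - k) C := by
  induction k with
  | zero => simpa using hhom
  | succ k ih =>
    have : HomOn (ambientLap n ((ambientLap n)^[k] f)) (p - k - 1) (q - k - 1) C :=
      hom_lap hC hcone (contDiffOn_lap_iter hC hf k) ih
    have hcast : (p - (k+1 : ℕ) : ℤ) = p - k - 1 := by push_cast; ring
    have hcast' : (q - (k+1 : ℕ) : ℤ) = q - k - 1 := by push_cast; ring
    rw [hcast, hcast']
    intro lam hlam z hz
    rw [Function.iterate_succ_apply']
    exact this lam hlam z hz

/-- The key commutator identity, by induction. -/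
theorem comm_lemma (hC : IsOpen C) (hcone : IsCone C) (hh : ContDiffOn ℝ ∞ h C)
    (hhom : HomOn h (-1) (-1) C) :
    ∀ k : ℕ, ∀ z ∈ C, (ambientLap n)^[k+1] (fun w => lorentzForm n w * h w) z
      = lorentzForm n z * (ambientLap n)^[k+1] h z
        + (((k:ℂ)+1) * ((n:ℂ) - ((k:ℂ)+1))) * (ambientLap n)^[k] h z := by
  intro k
  induction k with
  | zero =>
    intro z hz
    rw [Function.iterate_one]
    rw [lap_L_mul hC hz hh]
    have he := euler_eq hC hcone hh hhom hz
    rw [he.1, he.2]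
    simp only [Function.iterate_zero, id_eq]
    push_cast
    ring
  | succ k ih =>
    intro z hz
    set u := (ambientLap n)^[k+1] h with hu
    set v := (ambientLap n)^[k] h with hv
    set c : ℂ := ((k:ℂ)+1) * ((n:ℂ) - ((k:ℂ)+1)) with hcdef
    have husm : ContDiffOn ℝ ∞ u C := contDiffOn_lap_iter hC hh (k+1)
    have hvsm : ContDiffOn ℝ ∞ v C := contDiffOn_lap_iter hC hh k
    have hstep : (ambientLap n)^[k+1+1] (fun w => lorentzForm n w * h w) z
        = ambientLap n (fun w => lorentzForm n w * u w + c * v w) z := by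
      rw [Function.iterate_succ_apply']
      exact lap_congr hC hz ih
    rw [hstep]
    have hLu : ContDiffOn ℝ ∞ (fun w => lorentzForm n w * u w) C :=
      (contDiff_lorentzForm.contDiffOn).mul husm
    have hcv : ContDiffOn ℝ ∞ (fun w => c * v w) C := contDiffOn_const.mul hvsm
    rw [lap_add hC hz hLu hcv, lap_const_mul hC hz hvsm, lap_L_mul hC hz husm]
    have huhom : HomOn u (-1 - (k+1 : ℕ)) (-1 - (k+1 : ℕ)) C :=
      hom_lap_iter hC hcone hh hhom (k+1)
    have he := euler_eq hC hcone husm huhom hz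
    rw [he.1, he.2]
    have h1 : ambientLap n u z = (ambientLap n)^[k+1+1] h z := by
      rw [hu]
      exact (congrFun (Function.iterate_succ_apply' (ambientLap n) (k+1) h) z).symm
    have h2 : ambientLap n v z = u z := by
      rw [hv, hu]
      exact (congrFun (Function.iterate_succ_apply' (ambientLap n) k h) z).symm
    rw [h1, h2]
    push_cast
    ring

end HW
section ParamInt

variable {E : Type*} [NormedAddCommGroup E] [NormedSpace ℝ E] [ProperSpace E]
variable {F : Type*} [NormedAddCommGroup F] [NormedSpace ℝ F] [CompleteSpace F]
variable {U : Set E}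

/-- partial derivative in the first variable of an uncurried kernel -/
noncomputable def pKx (K : E → ℝ → F) (x : E) (t : ℝ) : E →L[ℝ] F :=
  (fderiv ℝ (fun p : E × ℝ => K p.1 p.2) (x, t)).comp (ContinuousLinearMap.inl ℝ E ℝ)

theorem pKx_smooth {K : E → ℝ → F} (hU : IsOpen U)
    (hK : ContDiffOn ℝ ∞ (fun p : E × ℝ => K p.1 p.2) (U ×ˢ Set.univ)) :
    ContDiffOn ℝ ∞ (fun p : E × ℝ => pKx K p.1 p.2) (U ×ˢ Set.univ) := by
  have hop : IsOpen (U ×ˢ (Set.univ : Set ℝ)) := hU.prod isOpen_univ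
  have hd : ContDiffOn ℝ ∞ (fderiv ℝ (fun p : E × ℝ => K p.1 p.2)) (U ×ˢ Set.univ) :=
    hK.fderiv_of_isOpen hop (by norm_num)
  have : ContDiffOn ℝ ∞
      (fun p : E × ℝ => (fderiv ℝ (fun p : E × ℝ => K p.1 p.2) p).comp
        (ContinuousLinearMap.inl ℝ E ℝ)) (U ×ˢ Set.univ) :=
    hd.clm_comp contDiffOn_const
  exact this

theorem hasFDerivAt_K_fst {K : E → ℝ → F} (hU : IsOpen U)
    (hK : ContDiffOn ℝ ∞ (fun p : E × ℝ => K p.1 p.2) (U ×ˢ Set.univ))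
    {x : E} (hx : x ∈ U) (t : ℝ) :
    HasFDerivAt (fun y => K y t) (pKx K x t) x := by
  have hop : IsOpen (U ×ˢ (Set.univ : Set ℝ)) := hU.prod isOpen_univ
  have hmem : (x, t) ∈ U ×ˢ (Set.univ : Set ℝ) := ⟨hx, trivial⟩
  have hdiff : DifferentiableAt ℝ (fun p : E × ℝ => K p.1 p.2) (x, t) :=
    ((hK.differentiableOn (by norm_num)).differentiableAt (hop.mem_nhds hmem))
  have hG : HasFDerivAt (fun p : E × ℝ => K p.1 p.2)
      (fderiv ℝ (fun p : E × ℝ => K p.1 p.2) (x, t)) (x, t) := hdiff.hasFDerivAt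
  have hin : HasFDerivAt (fun y : E => (y, t)) (ContinuousLinearMap.inl ℝ E ℝ) x :=
    hasFDerivAt_prodMk_left x t
  exact hG.comp x hin

set_option synthInstance.maxHeartbeats 1000000 in
theorem hasFDerivAt_parametric_integral {K : E → ℝ → F} (hU : IsOpen U)
    (hK : ContDiffOn ℝ ∞ (fun p : E × ℝ => K p.1 p.2) (U ×ˢ Set.univ))
    {z : E} (hz : z ∈ U) :
    HasFDerivAt (fun x => ∫ t in (0:ℝ)..1, K x t)
      (∫ t in (0:ℝ)..1, pKx K z t) z := by
  have hop : IsOpen (U ×ˢ (Set.univ : Set ℝ)) := hU.prod isOpen_univ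
  -- continuity facts
  have hKc : ContinuousOn (fun p : E × ℝ => K p.1 p.2) (U ×ˢ Set.univ) :=
    hK.continuousOn
  have hKxc : ContinuousOn (fun p : E × ℝ => pKx K p.1 p.2) (U ×ˢ Set.univ) :=
    (pKx_smooth hU hK).continuousOn
  have hKt : ∀ x ∈ U, Continuous (fun t => K x t) := by
    intro x hx
    rw [← continuousOn_univ]
    have hmap : ∀ t ∈ (Set.univ : Set ℝ), ((x, t) : E × ℝ) ∈ U ×ˢ (Set.univ : Set ℝ) :=
      fun t _ => ⟨hx, trivial⟩
    exact fun t ht => ((hKc ((x, t)) ⟨hx, trivial⟩).comp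
      ((continuous_const.prodMk continuous_id).continuousWithinAt) (fun u hu => ⟨hx, trivial⟩))
  have hKxt : ∀ x ∈ U, Continuous (fun t => pKx K x t) := by
    intro x hx
    rw [← continuousOn_univ]
    exact fun t ht => ((hKxc ((x, t)) ⟨hx, trivial⟩).comp
      ((continuous_const.prodMk continuous_id).continuousWithinAt) (fun u hu => ⟨hx, trivial⟩))
  -- choose a closed ball inside U
  obtain ⟨ε, hε, hball⟩ := Metric.isOpen_iff.1 hU z hz
  have hcb : Metric.closedBall z (ε/2) ⊆ U := fun w hw =>
    hball (Metric.mem_ball.2 (lt_of_le_of_lt (Metric.mem_closedBall.1 hw) (by linarith)))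
  -- compact bound
  have hQ : IsCompact ((Metric.closedBall z (ε/2)) ×ˢ (Set.uIcc (0:ℝ) 1)) :=
    (isCompact_closedBall z (ε/2)).prod isCompact_uIcc
  have hQsub : ((Metric.closedBall z (ε/2)) ×ˢ (Set.uIcc (0:ℝ) 1)) ⊆ U ×ˢ Set.univ :=
    Set.prod_mono hcb (Set.subset_univ _)
  obtain ⟨Cb, hCb⟩ := hQ.exists_bound_of_continuousOn (hKxc.mono hQsub)
  -- apply the dominated-Lipschitz lemma
  have main := intervalIntegral.hasFDerivAt_integral_of_dominated_loc_of_lip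
    (F := fun x t => K x t) (F' := fun t => pKx K z t) (x₀ := z)
    (a := 0) (b := 1) (bound := fun _ => Cb) (μ := MeasureTheory.volume)
    (s := Metric.ball z (ε/2)) (Metric.ball_mem_nhds z (by linarith))
    ?_ ?_ ?_ ?_ ?_ ?_
  · exact main.2
  · -- a.e. measurability near z
    filter_upwards [hU.mem_nhds hz] with x hx
    exact ((hKt x hx).aestronglyMeasurable).restrict
  · exact ((hKt z hz).intervalIntegrable 0 1)
  · exact ((hKxt z hz).aestronglyMeasurable).restrict
  · -- Lipschitz bound
    apply MeasureTheory.ae_of_all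
    intro t ht
    have htI : t ∈ Set.uIcc (0:ℝ) 1 := by
      rw [Set.uIcc_of_le (by norm_num : (0:ℝ) ≤ 1)]
      rw [Set.uIoc_of_le (by norm_num : (0:ℝ) ≤ 1)] at ht
      exact Set.Ioc_subset_Icc_self ht
    apply Convex.lipschitzOnWith_of_nnnorm_fderiv_le (𝕜 := ℝ)
      (fun x hx => (hasFDerivAt_K_fst hU hK (hball (Metric.ball_subset_ball (by linarith) hx)) t).differentiableAt)
      ?_ (convex_ball z (ε/2))
    intro x hx
    have hxU : x ∈ U := hball (Metric.ball_subset_ball (by linarith) hx)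
    have hfd : fderiv ℝ (fun y => K y t) x = pKx K x t :=
      (hasFDerivAt_K_fst hU hK hxU t).fderiv
    rw [hfd]
    have hmem : ((x, t) : E × ℝ) ∈ (Metric.closedBall z (ε/2)) ×ˢ (Set.uIcc (0:ℝ) 1) :=
      ⟨Metric.ball_subset_closedBall hx, htI⟩
    have := hCb (x, t) hmem
    rw [← NNReal.coe_le_coe]
    simp only [coe_nnnorm, Real.coe_nnabs]
    exact this.trans (le_abs_self Cb)
  · exact intervalIntegrable_const
  · apply MeasureTheory.ae_of_all
    intro t ht
    exact hasFDerivAt_K_fst hU hK hz t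

end ParamInt

section ParamInt2

variable {E : Type} [NormedAddCommGroup E] [NormedSpace ℝ E] [ProperSpace E]
variable {U : Set E}

theorem contDiffAt_parametric_integral (hU : IsOpen U) :
    ∀ (M : ℕ) {F : Type} [NormedAddCommGroup F] [NormedSpace ℝ F] [CompleteSpace F]
      (K : E → ℝ → F),
      ContDiffOn ℝ ∞ (fun p : E × ℝ => K p.1 p.2) (U ×ˢ Set.univ) →
      ∀ z ∈ U, ContDiffAt ℝ M (fun x => ∫ t in (0:ℝ)..1, K x t) z := by
  intro M
  induction M with
  | zero =>
    intro F _ _ _ K hK z hz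
    rw [show ((0 : ℕ) : WithTop ℕ∞) = 0 from rfl, contDiffAt_zero]
    exact ⟨U, hU.mem_nhds hz, fun w hw =>
      ((hasFDerivAt_parametric_integral hU hK hw).continuousAt).continuousWithinAt⟩
  | succ M ih =>
    intro F _ _ _ K hK z hz
    have hcast : ((M + 1 : ℕ) : WithTop ℕ∞) = (M : ℕ) + 1 := by push_cast; ring
    rw [hcast, contDiffAt_succ_iff_hasFDerivAt]
    refine ⟨fun x => ∫ t in (0:ℝ)..1, pKx K x t,
      ⟨U, hU.mem_nhds hz, fun x hx => hasFDerivAt_parametric_integral hU hK hx⟩, ?_⟩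
    exact ih (pKx K) (pKx_smooth hU hK) z hz

theorem contDiffOn_parametric_integral {K : E → ℝ → ℂ} (hU : IsOpen U)
    (hK : ContDiffOn ℝ ∞ (fun p : E × ℝ => K p.1 p.2) (U ×ˢ Set.univ)) :
    ContDiffOn ℝ ∞ (fun x => ∫ t in (0:ℝ)..1, K x t) U := by
  rw [contDiffOn_infty]
  intro M z hz
  exact (contDiffAt_parametric_integral hU M K hK z hz).contDiffWithinAt

end ParamInt2


namespace HW

variable {n : ℕ} {z : Fin (n + 1) → ℂ}

noncomputable def fA (z : Fin (n + 1) → ℂ) : ℝ := Complex.normSq (z 0)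

noncomputable def fB {n : ℕ} (z : Fin (n + 1) → ℂ) : ℝ :=
  ∑ j : Fin n, Complex.normSq (z j.succ)

def hadU (n : ℕ) : Set (Fin (n + 1) → ℂ) := {z | 0 < fA z ∧ 0 < fB z}

theorem contDiff_normSq : ContDiff ℝ ∞ (fun w : ℂ => Complex.normSq w) := by
  have : (fun w : ℂ => Complex.normSq w) = fun w : ℂ => w.re * w.re + w.im * w.im := by
    funext w; exact Complex.normSq_apply w
  rw [this]
  exact (Complex.reCLM.contDiff.mul Complex.reCLM.contDiff).add
    (Complex.imCLM.contDiff.mul Complex.imCLM.contDiff)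

theorem contDiff_fA : ContDiff ℝ ∞ (fA (n := n)) :=
  contDiff_normSq.comp (contDiff_coord 0)

theorem contDiff_fB : ContDiff ℝ ∞ (fB (n := n)) :=
  ContDiff.sum fun j _ => contDiff_normSq.comp (contDiff_coord j.succ)

theorem isOpen_hadU : IsOpen (hadU n) := by
  have h1 : IsOpen {z : Fin (n+1) → ℂ | 0 < fA z} :=
    isOpen_lt continuous_const (contDiff_fA.continuous)
  have h2 : IsOpen {z : Fin (n+1) → ℂ | 0 < fB z} :=
    isOpen_lt continuous_const (contDiff_fB.continuous)
  exact h1.inter h2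

theorem fA_smul (lam : ℂ) (z : Fin (n+1) → ℂ) :
    fA (lam • z) = Complex.normSq lam * fA z := by
  unfold fA; simp [Complex.normSq_mul]

theorem fB_smul (lam : ℂ) (z : Fin (n+1) → ℂ) :
    fB (lam • z) = Complex.normSq lam * fB z := by
  unfold fB
  rw [Finset.mul_sum]
  exact Finset.sum_congr rfl fun j _ => by simp [Complex.normSq_mul]

theorem cone_hadU : IsCone (hadU n) := by
  intro lam hlam z hz
  have hl : 0 < Complex.normSq lam := Complex.normSq_pos.2 hlam
  exact ⟨by rw [fA_smul]; exact mul_pos hl hz.1, by rw [fB_smul]; exact mul_pos hl hz.2⟩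

theorem hadU_ne_zero (hz : z ∈ hadU n) : z ≠ 0 := by
  intro h
  rw [h] at hz
  simp [fA, hadU] at hz

theorem lorentz_AB (z : Fin (n+1) → ℂ) :
    lorentzForm n z = ((fA z : ℝ) : ℂ) - ((fB (n := n) z : ℝ) : ℂ) := by
  unfold lorentzForm fA fB
  rw [Fin.sum_univ_succ]
  have h0 : lorentzSign (0 : Fin (n+1)) = 1 := by simp [lorentzSign]
  have hs : ∀ j : Fin n, lorentzSign j.succ = -1 := fun j => by
    simp [lorentzSign, Fin.succ_ne_zero]
  rw [h0]
  push_cast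
  rw [Finset.sum_congr rfl fun j _ => by rw [hs j]]
  simp [Finset.sum_neg_distrib]
  ring

theorem mem_hadU_of_cone (hz : z ≠ 0) (hL : lorentzForm n z = 0) : z ∈ hadU n := by
  have hAB : fA z = fB (n := n) z := by
    rw [lorentz_AB] at hL
    have := sub_eq_zero.1 hL
    exact_mod_cast this
  have hA : 0 ≤ fA z := Complex.normSq_nonneg _
  rcases eq_or_lt_of_le hA with h | h
  · exfalso
    apply hz
    have hB0 : fB (n := n) z = 0 := by rw [← hAB, ← h]
    have hz0 : z 0 = 0 := by
      have : Complex.normSq (z 0) = 0 := h.symm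
      exact Complex.normSq_eq_zero.1 this
    have hzs : ∀ j : Fin n, z j.succ = 0 := by
      intro j
      have hnn : ∀ j ∈ Finset.univ, (0:ℝ) ≤ Complex.normSq (z (Fin.succ j)) :=
        fun j _ => Complex.normSq_nonneg _
      have := (Finset.sum_eq_zero_iff_of_nonneg hnn).1 hB0 j (Finset.mem_univ j)
      exact Complex.normSq_eq_zero.1 this
    funext j
    rcases Fin.eq_zero_or_eq_succ j with h0 | ⟨k, rfl⟩
    · rw [h0]; exact hz0
    · exact hzs k
  · exact ⟨h, hAB ▸ h⟩

/-- the hyperbolic flow -/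
noncomputable def phiS (s : ℝ) (z : Fin (n + 1) → ℂ) : Fin (n + 1) → ℂ :=
  fun j => if j = 0 then (s : ℂ) * z j else ((s : ℂ))⁻¹ * z j

theorem phiS_one (z : Fin (n+1) → ℂ) : phiS 1 z = z := by
  funext j
  unfold phiS
  by_cases h : j = 0 <;> simp [h]

theorem phiS_smul (s : ℝ) (lam : ℂ) (z : Fin (n+1) → ℂ) :
    phiS s (lam • z) = lam • phiS s z := by
  funext j
  unfold phiS
  by_cases h : j = 0 <;> simp [h] <;> ring

theorem fA_phiS (s : ℝ) (z : Fin (n+1) → ℂ) : fA (phiS s z) = s^2 * fA z := by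
  unfold fA phiS
  rw [if_pos rfl, Complex.normSq_mul, Complex.normSq_ofReal]
  ring

theorem fB_phiS {s : ℝ} (hs : s ≠ 0) (z : Fin (n+1) → ℂ) :
    fB (phiS (n := n) s z) = (s^2)⁻¹ * fB z := by
  unfold fB phiS
  rw [Finset.mul_sum]
  apply Finset.sum_congr rfl
  intro j _
  rw [if_neg (Fin.succ_ne_zero j)]
  rw [← Complex.ofReal_inv, Complex.normSq_mul, Complex.normSq_ofReal]
  rw [show (s^2)⁻¹ = s⁻¹ * s⁻¹ by rw [sq, mul_inv]]

theorem phiS_ne_zero {s : ℝ} (hs : s ≠ 0) (hz : z ∈ hadU n) : phiS s z ≠ 0 := by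
  intro h
  have h0 : phiS s z 0 = 0 := by rw [h]; rfl
  unfold phiS at h0
  rw [if_pos rfl] at h0
  rcases mul_eq_zero.1 h0 with h1 | h1
  · exact hs (by exact_mod_cast h1)
  · have := hz.1
    unfold fA at this
    rw [h1] at this
    simp at this

noncomputable def sstar {n : ℕ} (z : Fin (n + 1) → ℂ) : ℝ :=
  (fB (n := n) z / fA z) ^ (((4:ℕ) : ℝ))⁻¹

theorem sstar_pos (hz : z ∈ hadU n) : 0 < sstar z :=
  Real.rpow_pos_of_pos (div_pos hz.2 hz.1) _

theorem sstar_pow4 (hz : z ∈ hadU n) : (sstar z) ^ (4:ℕ) = fB (n := n) z / fA z :=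
  Real.rpow_inv_natCast_pow (le_of_lt (div_pos hz.2 hz.1)) (by norm_num)

theorem contDiffOn_sstar : ContDiffOn ℝ ∞ (sstar (n := n)) (hadU n) := by
  intro z hz
  apply ContDiffAt.contDiffWithinAt
  have hq : ContDiffAt ℝ ∞ (fun z : Fin (n+1) → ℂ => fB (n := n) z / fA z) z :=
    (contDiff_fB.contDiffAt).div (contDiff_fA.contDiffAt) (ne_of_gt hz.1)
  exact hq.rpow_const_of_ne (ne_of_gt (div_pos hz.2 hz.1))

theorem lorentz_phiS_sstar (hz : z ∈ hadU n) :
    lorentzForm n (phiS (sstar z) z) = 0 := by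
  have hs := sstar_pos hz
  rw [lorentz_AB, fA_phiS, fB_phiS (ne_of_gt hs)]
  have h4 := sstar_pow4 hz
  have hA := ne_of_gt hz.1
  rw [sub_eq_zero]
  congr 1
  have : (sstar z)^2 * ((sstar z)^2 * fA z) = (sstar z)^2 * (((sstar z)^2)⁻¹ * fB (n := n) z) := by
    rw [← mul_assoc ((sstar z)^2) (((sstar z)^2)⁻¹), mul_inv_cancel₀ (by positivity), one_mul]
    have : (sstar z)^2 * ((sstar z)^2 * fA z) = (sstar z)^(4:ℕ) * fA z := by ring
    rw [this, h4]
    field_simp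
  have hs2 : ((sstar z)^2) ≠ 0 := by positivity
  field_simp at this ⊢
  linarith [this]

end HW


namespace HW

variable {n : ℕ} {z : Fin (n + 1) → ℂ} {g : (Fin (n + 1) → ℂ) → ℂ}

def hadW (n : ℕ) : Set (ℝ × (Fin (n + 1) → ℂ)) := {p | 0 < p.1 ∧ p.2 ∈ hadU n}

theorem isOpen_hadW : IsOpen (hadW n) := by
  have h1 : IsOpen {p : ℝ × (Fin (n+1) → ℂ) | 0 < p.1} := isOpen_lt continuous_const continuous_fst
  have h2 : IsOpen {p : ℝ × (Fin (n+1) → ℂ) | p.2 ∈ hadU n} := isOpen_hadU.preimage continuous_snd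
  exact h1.inter h2

theorem contDiffOn_phiS_pair :
    ContDiffOn ℝ ∞ (fun p : ℝ × (Fin (n+1) → ℂ) => phiS p.1 p.2) (hadW n) := by
  rw [contDiffOn_pi]
  intro j
  by_cases hj : j = 0
  · have : (fun p : ℝ × (Fin (n+1) → ℂ) => phiS p.1 p.2 j)
        = fun p => ((p.1 : ℝ) : ℂ) * p.2 j := by
      funext p; unfold phiS; rw [if_pos hj]
    rw [this]
    exact ((Complex.ofRealCLM.contDiff.comp contDiff_fst).mul
      ((contDiff_coord j).comp contDiff_snd)).contDiffOn
  · have : (fun p : ℝ × (Fin (n+1) → ℂ) => phiS p.1 p.2 j)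
        = fun p => (((p.1 : ℝ) : ℂ))⁻¹ * p.2 j := by
      funext p; unfold phiS; rw [if_neg hj]
    rw [this]
    apply ContDiffOn.mul
    · apply ContDiffOn.inv
      · exact (Complex.ofRealCLM.contDiff.comp contDiff_fst).contDiffOn
      · intro p hp
        simp only [ne_eq, Complex.ofReal_eq_zero]
        exact ne_of_gt hp.1
    · exact ((contDiff_coord j).comp contDiff_snd).contDiffOn

theorem phiS_mapsTo : Set.MapsTo (fun p : ℝ × (Fin (n+1) → ℂ) => phiS p.1 p.2) (hadW n)
    {z : Fin (n+1) → ℂ | z ≠ 0} :=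
  fun p hp => phiS_ne_zero (ne_of_gt hp.1) hp.2

/-- the kernel built from `g` -/
noncomputable def Gg (g : (Fin (n + 1) → ℂ) → ℂ) : ℝ × (Fin (n + 1) → ℂ) → ℂ :=
  fun p => g (phiS p.1 p.2)

noncomputable def pGg (g : (Fin (n + 1) → ℂ) → ℂ) (p : ℝ × (Fin (n + 1) → ℂ)) : ℂ :=
  (fderiv ℝ (Gg g) p) ((1:ℝ), (0 : Fin (n + 1) → ℂ))

theorem contDiffOn_Gg (hg : ContDiffOn ℝ ∞ g {z : Fin (n+1) → ℂ | z ≠ 0}) :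
    ContDiffOn ℝ ∞ (Gg g) (hadW n) :=
  hg.comp contDiffOn_phiS_pair phiS_mapsTo

theorem contDiffOn_pGg (hg : ContDiffOn ℝ ∞ g {z : Fin (n+1) → ℂ | z ≠ 0}) :
    ContDiffOn ℝ ∞ (pGg g) (hadW n) :=
  (((contDiffOn_Gg hg).fderiv_of_isOpen isOpen_hadW (by norm_num)).clm_apply contDiffOn_const)

theorem pGg_smul (hg : ContDiffOn ℝ ∞ g {z : Fin (n+1) → ℂ | z ≠ 0})
    (hbh : BiHomogeneous g 0 0) {lam : ℂ} (hlam : lam ≠ 0) {s : ℝ}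
    (hp : (s, z) ∈ hadW n) :
    pGg g (s, lam • z) = pGg g (s, z) := by
  set S : (Fin (n + 1) → ℂ) →L[ℝ] (Fin (n + 1) → ℂ) :=
    (lam • ContinuousLinearMap.id ℂ (Fin (n + 1) → ℂ)).restrictScalars ℝ with hS
  set T : (ℝ × (Fin (n + 1) → ℂ)) →L[ℝ] (ℝ × (Fin (n + 1) → ℂ)) :=
    (ContinuousLinearMap.id ℝ ℝ).prodMap S with hT
  have hTapp : ∀ p : ℝ × (Fin (n + 1) → ℂ), T p = (p.1, lam • p.2) := fun p => rfl
  have hTW : ∀ p ∈ hadW n, T p ∈ hadW n := by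
    intro p hp'
    rw [hTapp]
    exact ⟨hp'.1, cone_hadU lam hlam p.2 hp'.2⟩
  have heq : (fun p => Gg g (T p)) =ᶠ[nhds ((s, z) : ℝ × (Fin (n+1) → ℂ))] Gg g := by
    apply Filter.eventually_iff_exists_mem.2 ⟨hadW n, isOpen_hadW.mem_nhds hp, ?_⟩
    intro p hp'
    show Gg g (T p) = Gg g p
    rw [hTapp p]
    show g (phiS p.1 (lam • p.2)) = g (phiS p.1 p.2)
    rw [phiS_smul, hbh lam hlam]
    simp
  have hdGg : DifferentiableAt ℝ (Gg g) (T (s, z)) :=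
    ((contDiffOn_Gg hg).differentiableOn (by norm_num)).differentiableAt
      (isOpen_hadW.mem_nhds (hTW _ hp))
  have hcomp : fderiv ℝ (fun p => Gg g (T p)) (s, z) = (fderiv ℝ (Gg g) (T (s, z))).comp T := by
    have := fderiv_comp (s, z) hdGg T.differentiableAt
    rw [T.fderiv] at this
    exact this
  have hfe : fderiv ℝ (fun p => Gg g (T p)) (s, z) = fderiv ℝ (Gg g) (s, z) := heq.fderiv_eq
  rw [hcomp] at hfe
  have happ := congrArg (fun (L : (ℝ × (Fin (n+1) → ℂ)) →L[ℝ] ℂ) => L ((1:ℝ), (0 : Fin (n+1) → ℂ))) hfe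
  simp only [ContinuousLinearMap.comp_apply] at happ
  have hT10 : T ((1:ℝ), (0 : Fin (n+1) → ℂ)) = ((1:ℝ), (0 : Fin (n+1) → ℂ)) := by
    rw [hTapp]; simp
  rw [hT10] at happ
  have hTsz : T (s, z) = (s, lam • z) := hTapp _
  rw [hTsz] at happ
  exact happ

noncomputable def ellT {n : ℕ} (t : ℝ) (z : Fin (n + 1) → ℂ) : ℝ :=
  sstar z + Real.smoothTransition t * (1 - sstar z)

theorem ellT_pos (hz : z ∈ hadU n) (t : ℝ) : 0 < ellT t z := by
  have h1 := Real.smoothTransition.nonneg t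
  have h2 := Real.smoothTransition.le_one t
  have h3 := sstar_pos hz
  unfold ellT
  nlinarith [mul_nonneg (le_of_lt h3) (sub_nonneg.2 h2)]

theorem contDiff_psi : ContDiff ℝ ∞ Real.smoothTransition := by
  exact_mod_cast Real.smoothTransition.contDiff (n := (⊤ : ℕ∞))

theorem contDiff_psi_deriv : ContDiff ℝ ∞ (deriv Real.smoothTransition) :=
  (contDiff_infty_iff_deriv.1 contDiff_psi).2

theorem hasDerivAt_psi (t : ℝ) :
    HasDerivAt Real.smoothTransition (deriv Real.smoothTransition t) t :=
  ((contDiff_psi.differentiable (by norm_num)) t).hasDerivAt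

/-- the integrand -/
noncomputable def hKer (g : (Fin (n + 1) → ℂ) → ℂ) (z : Fin (n + 1) → ℂ) (t : ℝ) : ℂ :=
  ((deriv Real.smoothTransition t : ℝ) : ℂ) * pGg g (ellT t z, z)

noncomputable def theta {n : ℕ} (p : (Fin (n + 1) → ℂ) × ℝ) : ℝ × (Fin (n + 1) → ℂ) :=
  (ellT p.2 p.1, p.1)

theorem contDiffOn_theta :
    ContDiffOn ℝ ∞ (theta (n := n)) ((hadU n) ×ˢ (Set.univ : Set ℝ)) := by
  apply ContDiffOn.prodMk
  · have h1 : ContDiffOn ℝ ∞ (fun p : (Fin (n+1) → ℂ) × ℝ => sstar p.1)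
        ((hadU n) ×ˢ (Set.univ : Set ℝ)) :=
      contDiffOn_sstar.comp contDiff_fst.contDiffOn (fun p hp => hp.1)
    have h2 : ContDiffOn ℝ ∞ (fun p : (Fin (n+1) → ℂ) × ℝ => Real.smoothTransition p.2)
        ((hadU n) ×ˢ (Set.univ : Set ℝ)) :=
      (contDiff_psi.comp contDiff_snd).contDiffOn
    exact h1.add (h2.mul (contDiffOn_const.sub h1))
  · exact contDiff_fst.contDiffOn

theorem theta_mapsTo : Set.MapsTo (theta (n := n)) ((hadU n) ×ˢ (Set.univ : Set ℝ)) (hadW n) :=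
  fun p hp => ⟨ellT_pos hp.1 p.2, hp.1⟩

theorem contDiffOn_hKer_joint (hg : ContDiffOn ℝ ∞ g {z : Fin (n+1) → ℂ | z ≠ 0}) :
    ContDiffOn ℝ ∞ (fun p : (Fin (n+1) → ℂ) × ℝ => hKer g p.1 p.2)
      ((hadU n) ×ˢ (Set.univ : Set ℝ)) := by
  apply ContDiffOn.mul
  · exact ((Complex.ofRealCLM.contDiff.comp (contDiff_psi_deriv.comp contDiff_snd))).contDiffOn
  · exact (contDiffOn_pGg hg).comp contDiffOn_theta theta_mapsTo

noncomputable def hNum (g : (Fin (n + 1) → ℂ) → ℂ) (z : Fin (n + 1) → ℂ) : ℂ :=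
  ∫ t in (0:ℝ)..1, hKer g z t

theorem contDiffOn_hNum (hg : ContDiffOn ℝ ∞ g {z : Fin (n+1) → ℂ | z ≠ 0}) :
    ContDiffOn ℝ ∞ (hNum g) (hadU n) :=
  contDiffOn_parametric_integral isOpen_hadU (contDiffOn_hKer_joint hg)

end HW


namespace HW

variable {n : ℕ} {z : Fin (n + 1) → ℂ} {g f : (Fin (n + 1) → ℂ) → ℂ}
  {s : Set (Fin (n + 1) → ℂ)}

theorem hKer_cont (hg : ContDiffOn ℝ ∞ g {z : Fin (n+1) → ℂ | z ≠ 0}) (hz : z ∈ hadU n) :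
    Continuous (fun t => hKer g z t) := by
  have hj := (contDiffOn_hKer_joint hg).continuousOn
  rw [← continuousOn_univ]
  intro t _
  exact (hj ((z, t)) ⟨hz, trivial⟩).comp
    ((continuous_const.prodMk continuous_id).continuousWithinAt) (fun u _ => ⟨hz, trivial⟩)

theorem key_div (hg : ContDiffOn ℝ ∞ g {z : Fin (n+1) → ℂ | z ≠ 0})
    (hbh : BiHomogeneous g 0 0)
    (hvan : ∀ w : Fin (n+1) → ℂ, w ≠ 0 → lorentzForm n w = 0 → g w = 0)
    (hz : z ∈ hadU n) :
    ((1 - sstar z : ℝ) : ℂ) * hNum g z = g z := by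
  have hpath : ∀ t : ℝ, HasDerivAt (fun t => Gg g (ellT t z, z))
      (((1 - sstar z : ℝ) : ℂ) * hKer g z t) t := by
    intro t
    have hℓ : HasDerivAt (fun t => ellT (n := n) t z)
        (deriv Real.smoothTransition t * (1 - sstar z)) t :=
      ((hasDerivAt_psi t).mul_const _).const_add _
    have hpair : HasDerivAt (fun t => ((ellT t z, z) : ℝ × (Fin (n+1) → ℂ)))
        ((deriv Real.smoothTransition t * (1 - sstar z), (0 : Fin (n+1) → ℂ))) t :=
      hℓ.prodMk (hasDerivAt_const t z)
    have hmem : ((ellT t z, z) : ℝ × (Fin (n+1) → ℂ)) ∈ hadW n := ⟨ellT_pos hz t, hz⟩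
    have hdG : HasFDerivAt (Gg g) (fderiv ℝ (Gg g) (ellT t z, z)) (ellT t z, z) :=
      (((contDiffOn_Gg hg).differentiableOn (by norm_num)).differentiableAt
        (isOpen_hadW.mem_nhds hmem)).hasFDerivAt
    have hcomp := hdG.comp_hasDerivAt t hpair
    have hvec : ((deriv Real.smoothTransition t * (1 - sstar z), (0 : Fin (n+1) → ℂ))
          : ℝ × (Fin (n+1) → ℂ))
        = (deriv Real.smoothTransition t * (1 - sstar z)) • ((1:ℝ), (0 : Fin (n+1) → ℂ)) := by
      simp
    rw [hvec, ContinuousLinearMap.map_smul] at hcomp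
    have hval : (deriv Real.smoothTransition t * (1 - sstar z))
          • ((fderiv ℝ (Gg g) (ellT t z, z)) ((1:ℝ), (0 : Fin (n+1) → ℂ)))
        = ((1 - sstar z : ℝ) : ℂ) * hKer g z t := by
      unfold hKer pGg
      rw [Complex.real_smul]
      push_cast
      ring
    rw [hval] at hcomp
    simpa [Function.comp_def] using hcomp
  have hint : IntervalIntegrable (fun t => ((1 - sstar z : ℝ) : ℂ) * hKer g z t)
      MeasureTheory.volume 0 1 :=
    (continuous_const.mul (hKer_cont hg hz)).intervalIntegrable 0 1
  have hftc := intervalIntegral.integral_eq_sub_of_hasDerivAt (fun t _ => hpath t) hint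
  rw [intervalIntegral.integral_const_mul] at hftc
  unfold hNum
  rw [hftc]
  have hell1 : ellT (n := n) 1 z = 1 := by
    unfold ellT
    rw [Real.smoothTransition.one_of_one_le le_rfl]
    ring
  have hell0 : ellT (n := n) 0 z = sstar z := by
    unfold ellT
    rw [Real.smoothTransition.zero_of_nonpos le_rfl]
    ring
  have h1 : Gg g (ellT 1 z, z) = g z := by
    unfold Gg
    rw [hell1]
    simp only []
    rw [phiS_one]
  have h0 : Gg g (ellT 0 z, z) = 0 := by
    unfold Gg
    rw [hell0]
    exact hvan _ (phiS_ne_zero (ne_of_gt (sstar_pos hz)) hz) (lorentz_phiS_sstar hz)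
  rw [h1, h0, sub_zero]

noncomputable def hDen {n : ℕ} (z : Fin (n + 1) → ℂ) : ℝ :=
  fA z * (1 + sstar (n := n) z + sstar (n := n) z^2 + sstar (n := n) z^3)

theorem hDen_pos (hz : z ∈ hadU n) : 0 < hDen z := by
  have h1 := hz.1
  have h2 := sstar_pos hz
  unfold hDen
  positivity

noncomputable def hQuot (g : (Fin (n + 1) → ℂ) → ℂ) (z : Fin (n + 1) → ℂ) : ℂ :=
  hNum g z / ((hDen z : ℝ) : ℂ)

theorem lorentz_factor (hz : z ∈ hadU n) :
    lorentzForm n z = ((1 - sstar z : ℝ) : ℂ) * ((hDen z : ℝ) : ℂ) := by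
  rw [lorentz_AB]
  have hB : fB (n := n) z = fA z * (sstar z)^(4:ℕ) := by
    rw [sstar_pow4 hz, mul_comm, div_mul_cancel₀ _ (ne_of_gt hz.1)]
  have hreal : fA z - fB (n := n) z = (1 - sstar z) * hDen z := by
    rw [hB]
    unfold hDen
    ring
  rw [← Complex.ofReal_mul, ← hreal]
  push_cast
  ring

theorem L_mul_hQuot (hg : ContDiffOn ℝ ∞ g {z : Fin (n+1) → ℂ | z ≠ 0})
    (hbh : BiHomogeneous g 0 0)
    (hvan : ∀ w : Fin (n+1) → ℂ, w ≠ 0 → lorentzForm n w = 0 → g w = 0)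
    (hz : z ∈ hadU n) :
    lorentzForm n z * hQuot g z = g z := by
  rw [lorentz_factor hz]
  unfold hQuot
  have hD : ((hDen (n := n) z : ℝ) : ℂ) ≠ 0 := by
    exact_mod_cast ne_of_gt (hDen_pos hz)
  rw [← key_div hg hbh hvan hz]
  field_simp

theorem contDiffOn_hQuot (hg : ContDiffOn ℝ ∞ g {z : Fin (n+1) → ℂ | z ≠ 0}) :
    ContDiffOn ℝ ∞ (hQuot g) (hadU n) := by
  have hden : ContDiffOn ℝ ∞ (hDen (n := n)) (hadU n) := by
    unfold hDen
    exact (contDiff_fA.contDiffOn).mul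
      (((contDiffOn_const.add contDiffOn_sstar).add (contDiffOn_sstar.pow 2)).add
        (contDiffOn_sstar.pow 3))
  have hdenC : ContDiffOn ℝ ∞ (fun w => ((hDen (n := n) w : ℝ) : ℂ)) (hadU n) :=
    Complex.ofRealCLM.contDiff.comp_contDiffOn hden
  have hne : ∀ w ∈ hadU n, ((hDen (n := n) w : ℝ) : ℂ) ≠ 0 := fun w hw => by
    exact_mod_cast ne_of_gt (hDen_pos hw)
  exact ContDiffOn.mul (contDiffOn_hNum hg) (hdenC.inv hne)

theorem sstar_smul {lam : ℂ} (hlam : lam ≠ 0) (z : Fin (n+1) → ℂ) :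
    sstar (n := n) (lam • z) = sstar (n := n) z := by
  unfold sstar
  rw [fA_smul, fB_smul, mul_div_mul_left _ _ (ne_of_gt (Complex.normSq_pos.2 hlam))]

theorem hNum_smul (hg : ContDiffOn ℝ ∞ g {z : Fin (n+1) → ℂ | z ≠ 0})
    (hbh : BiHomogeneous g 0 0) {lam : ℂ} (hlam : lam ≠ 0) (hz : z ∈ hadU n) :
    hNum g (lam • z) = hNum g z := by
  unfold hNum
  congr 1
  funext t
  unfold hKer
  have hes : ellT (n := n) t (lam • z) = ellT t z := by
    unfold ellT
    rw [sstar_smul hlam]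
  rw [hes, pGg_smul (s := ellT t z) hg hbh hlam ⟨ellT_pos hz t, hz⟩]

theorem hom_hQuot (hg : ContDiffOn ℝ ∞ g {z : Fin (n+1) → ℂ | z ≠ 0})
    (hbh : BiHomogeneous g 0 0) :
    HomOn (hQuot g) (-1) (-1) (hadU n) := by
  intro lam hlam z hz
  unfold hQuot
  rw [hNum_smul hg hbh hlam hz]
  have hdsm : hDen (n := n) (lam • z) = Complex.normSq lam * hDen z := by
    unfold hDen
    rw [fA_smul, sstar_smul hlam]
    ring
  rw [hdsm]
  have hD : ((hDen (n := n) z : ℝ) : ℂ) ≠ 0 := by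
    exact_mod_cast ne_of_gt (hDen_pos hz)
  have hnsq : ((Complex.normSq lam : ℝ) : ℂ) = lam * (starRingEnd ℂ) lam := by
    rw [← Complex.mul_conj]
  have hlc : (starRingEnd ℂ) lam ≠ 0 := by simpa using hlam
  rw [zpow_neg_one, zpow_neg_one]
  push_cast
  rw [hnsq]
  field_simp

theorem lap_iter_sub (hs : IsOpen s) (hf : ContDiffOn ℝ ∞ f s) (hg : ContDiffOn ℝ ∞ g s)
    (k : ℕ) : ∀ z ∈ s, (ambientLap n)^[k] (fun w => f w - g w) z
      = (ambientLap n)^[k] f z - (ambientLap n)^[k] g z := by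
  induction k with
  | zero => intro z hz; rfl
  | succ k ih =>
    intro z hz
    rw [Function.iterate_succ_apply']
    have h1 : ambientLap n ((ambientLap n)^[k] (fun w => f w - g w)) z
        = ambientLap n (fun w => (ambientLap n)^[k] f w - (ambientLap n)^[k] g w) z :=
      lap_congr hs hz ih
    rw [h1, lap_sub hs hz (contDiffOn_lap_iter hs hf k) (contDiffOn_lap_iter hs hg k),
      ← Function.iterate_succ_apply' (ambientLap n) k f,
      ← Function.iterate_succ_apply' (ambientLap n) k g]

end HW

open HW in
/-- for `h` smooth on `ℂ^{n+1}∖{0}` homogeneous of degree `(−1,−1)`, the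
function `Δ^n(L·h)` vanishes on the null cone `{L = 0}`.  Consequently, if two smooth
functions homogeneous of degree `(0,0)` agree on `N = {L = 0}∖{0}`, then so do their
images under `Δ^n`. -/
theorem lapPow_L_vanishes_on_cone (n : ℕ) (hn : 0 < n) :
    (∀ h : (Fin (n + 1) → ℂ) → ℂ,
        ContDiffOn ℝ (⊤ : ℕ∞) h {z : Fin (n + 1) → ℂ | z ≠ 0} →
        BiHomogeneous h (-1) (-1) →
        ∀ z : Fin (n + 1) → ℂ, z ≠ 0 → lorentzForm n z = 0 →
          (ambientLap n)^[n] (fun w => lorentzForm n w * h w) z = 0)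
    ∧ (∀ f₁ f₂ : (Fin (n + 1) → ℂ) → ℂ,
        ContDiffOn ℝ (⊤ : ℕ∞) f₁ {z : Fin (n + 1) → ℂ | z ≠ 0} →
        ContDiffOn ℝ (⊤ : ℕ∞) f₂ {z : Fin (n + 1) → ℂ | z ≠ 0} →
        BiHomogeneous f₁ 0 0 → BiHomogeneous f₂ 0 0 →
        (∀ z : Fin (n + 1) → ℂ, z ≠ 0 → lorentzForm n z = 0 → f₁ z = f₂ z) →
        ∀ z : Fin (n + 1) → ℂ, z ≠ 0 → lorentzForm n z = 0 →
          (ambientLap n)^[n] f₁ z = (ambientLap n)^[n] f₂ z) := by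
  have hopen : IsOpen {z : Fin (n + 1) → ℂ | z ≠ 0} := by
    have : {z : Fin (n + 1) → ℂ | z ≠ 0} = {(0 : Fin (n + 1) → ℂ)}ᶜ := by
      ext w; simp
    rw [this]
    exact isOpen_compl_singleton
  have hcone : IsCone {z : Fin (n + 1) → ℂ | z ≠ 0} := fun lam hl w hw => smul_ne_zero hl hw
  have he : n - 1 + 1 = n := Nat.succ_pred_eq_of_pos hn
  have hcast : (((n-1 : ℕ)) : ℂ) = (n:ℂ) - 1 := Nat.cast_pred hn
  have hcoeff : ((((n-1:ℕ) : ℂ))+1) * ((n:ℂ) - (((n-1:ℕ):ℂ)+1)) = 0 := by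
    rw [hcast]; ring
  constructor
  · intro h hsm hbh z hz hL
    have hsm' : ContDiffOn ℝ ∞ h {z : Fin (n + 1) → ℂ | z ≠ 0} := hsm.of_le (by simp)
    have hhom : HomOn h (-1) (-1) {z : Fin (n + 1) → ℂ | z ≠ 0} :=
      fun lam hl w _ => hbh lam hl w
    have hmain := comm_lemma hopen hcone hsm' hhom (n-1) z hz
    rw [he] at hmain
    rw [hmain, hL, hcoeff]
    ring
  · intro f₁ f₂ hf₁ hf₂ hb₁ hb₂ hagree z hz hL
    set g : (Fin (n + 1) → ℂ) → ℂ := fun w => f₁ w - f₂ w with hgdef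
    have hgsm : ContDiffOn ℝ ∞ g {z : Fin (n + 1) → ℂ | z ≠ 0} :=
      (hf₁.of_le (by simp)).sub (hf₂.of_le (by simp))
    have hbh : BiHomogeneous g 0 0 := by
      intro lam hl w
      show f₁ (lam • w) - f₂ (lam • w) = lam ^ (0:ℤ) * ((starRingEnd ℂ) lam) ^ (0:ℤ) * (f₁ w - f₂ w)
      rw [hb₁ lam hl w, hb₂ lam hl w]
      ring
    have hvan : ∀ w : Fin (n+1) → ℂ, w ≠ 0 → lorentzForm n w = 0 → g w = 0 :=
      fun w hw hLw => sub_eq_zero.2 (hagree w hw hLw)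
    have hzU : z ∈ hadU n := mem_hadU_of_cone hz hL
    have hiter : (ambientLap n)^[n] g z
        = (ambientLap n)^[n] (fun w => lorentzForm n w * hQuot g w) z :=
      lap_iter_congr isOpen_hadU (fun w hw => (L_mul_hQuot hgsm hbh hvan hw).symm) n z hzU
    have hsmq := contDiffOn_hQuot (n := n) (g := g) hgsm
    have hhomq := hom_hQuot (n := n) (g := g) hgsm hbh
    have hmain := comm_lemma isOpen_hadU cone_hadU hsmq hhomq (n-1) z hzU
    rw [he] at hmain
    have hzero : (ambientLap n)^[n] g z = 0 := by
      rw [hiter, hmain, hL, hcoeff]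
      ring
    have hsub := lap_iter_sub hopen (hf₁.of_le (by simp)) (hf₂.of_le (by simp)) n z hz
    rw [hsub] at hzero
    exact sub_eq_zero.1 hzero
end
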